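/- arXiv:1401.6894 — 8 statements merged into one kernel-verified Lean document; each statement's English description precedes it below -/
import Mathlib

section
/- The number of self-avoiding paths from (0,...,0) to (1,...,1) on the L-hypercube with exactly one backstep (length L+2) equals L! * L(L-1)(L-2)/6. -/
/-- Two vertices of the hypercube are adjacent if they differ in exactly one
coordinate. -/
def HypercubeAdj {L : ℕ} (u v : Fin L → Bool) : Prop := ∃! i, u i ≠ v i

/-- `p` is a self-avoiding path of length `n` on the `L`-hypercube. -/
def IsSAPath {L : ℕ} (n : ℕ) (p : Fin (n+1) → Fin L → Bool) : Prop :=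
  Function.Injective p ∧ ∀ i : Fin n, HypercubeAdj (p i.castSucc) (p i.succ)

/-!
A walk on the hypercube from `0` is determined by the word of coordinates it flips, and it ends
at `1` iff every coordinate is flipped an odd number of times; with `L + 2` steps this means one
coordinate `r` is flipped three times and every other one once. If the walk visits a vertex twice,
every coordinate is flipped an even number of times in between, so only `r` is, twice, and on
consecutive steps. Hence self-avoiding paths correspond to words with no two equal consecutive
letters. These are exactly the words obtained from a permutation `σ` of the coordinates by
repeating the letter `σ a` at positions `b + 1` and `c + 2`, for `a < b < c`: there are
`L! * choose L 3` of them.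
-/

open Finset

theorem exists_eq_three_of_odd_of_sum_eq {ι : Type*} [Fintype ι] {g : ι → ℕ}
    (hodd : ∀ i, Odd (g i)) (hsum : ∑ i, g i = Fintype.card ι + 2) :
    ∃ r, g r = 3 ∧ ∀ i, i ≠ r → g i = 1 := by
  classical
  choose k hk using hodd
  have hk_sum : ∑ i, k i = 1 := by
    have : ∑ i, g i = 2 * ∑ i, k i + Fintype.card ι := by
      simp [hk, sum_add_distrib, mul_sum]
    omega
  obtain ⟨r, -, hr⟩ := exists_ne_zero_of_sum_ne_zero (s := univ) (f := k) (by omega)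
  have hsplit := add_sum_erase univ k (mem_univ r)
  have hrest : ∑ i ∈ univ.erase r, k i = 0 := by omega
  refine ⟨r, by rw [hk r]; omega, fun i hi => ?_⟩
  have := sum_eq_zero_iff.1 hrest i (mem_erase.2 ⟨hi, mem_univ i⟩)
  simp [hk i, this]

namespace Hypercube

variable {n L : ℕ}

def windowCount (f : Fin n → Fin L) (j : Fin L) (t t' : ℕ) : ℕ :=
  #{s : Fin n | t ≤ s.val ∧ s.val < t' ∧ f s = j}

def walkOf (f : Fin n → Fin L) (t : Fin (n + 1)) (j : Fin L) : Bool :=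
  decide (Odd (windowCount f j 0 t))

section walk

variable {f : Fin n → Fin L} {j : Fin L}

theorem windowCount_add {t t' t'' : ℕ} (h : t ≤ t') (h' : t' ≤ t'') :
    windowCount f j t t'' = windowCount f j t t' + windowCount f j t' t'' := by
  rw [windowCount, windowCount, windowCount, ← card_union_of_disjoint]
  · congr 1; ext s; simp only [mem_filter, mem_union, mem_univ, true_and]; omega
  · rw [disjoint_filter]; intro s _ h1 h2; omega

theorem windowCount_succ (i : Fin n) :
    windowCount f j i (i + 1) = if f i = j then 1 else 0 := by
  have : ({s : Fin n | (i : ℕ) ≤ s ∧ s < (i : ℕ) + 1 ∧ f s = j} : Finset _) =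
      ({i} : Finset _).filter (f · = j) := by
    ext s; simp only [mem_filter, mem_univ, true_and, mem_singleton, Fin.ext_iff]; omega
  rw [windowCount, this, filter_singleton]
  split_ifs <;> rfl

theorem windowCount_le_card (t t' : ℕ) : windowCount f j t t' ≤ #{s | f s = j} :=
  card_le_card fun s => by simp only [mem_filter, mem_univ, true_and]; exact fun h => h.2.2

theorem windowCount_zero_self : windowCount f j 0 0 = 0 := by
  simp [windowCount]

theorem windowCount_zero_length : windowCount f j 0 n = #{s | f s = j} := by
  simp [windowCount, Fin.is_lt]

theorem windowCount_pos {t t' : ℕ} {s : Fin n} (h : t ≤ s.val) (h' : s.val < t') :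
    0 < windowCount f (f s) t t' :=
  card_pos.2 ⟨s, by simp [h, h']⟩

theorem walkOf_zero : walkOf f 0 = fun _ => false := by
  funext j; simp [walkOf, windowCount_zero_self]

theorem walkOf_last : walkOf f (Fin.last n) j = decide (Odd #{s | f s = j}) := by
  simp [walkOf, windowCount_zero_length]

theorem walkOf_apply_eq_iff {t t' : Fin (n + 1)} (h : t ≤ t') :
    walkOf f t j = walkOf f t' j ↔ Even (windowCount f j t t') := by
  rw [walkOf, walkOf, windowCount_add (Nat.zero_le _) h, decide_eq_decide, Nat.odd_add]
  tauto

theorem walkOf_castSucc_ne_succ_iff (i : Fin n) :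
    walkOf f i.castSucc j ≠ walkOf f i.succ j ↔ f i = j := by
  rw [Ne, walkOf_apply_eq_iff (Fin.castSucc_le_succ i), Fin.val_castSucc, Fin.val_succ,
    windowCount_succ]
  split_ifs <;> simp_all

theorem hypercubeAdj_walkOf (i : Fin n) :
    HypercubeAdj (walkOf f i.castSucc) (walkOf f i.succ) :=
  ⟨f i, walkOf_castSucc_ne_succ_iff i |>.2 rfl,
    fun _ hj => (walkOf_castSucc_ne_succ_iff i |>.1 hj).symm⟩

theorem walkOf_injective : Function.Injective (walkOf : (Fin n → Fin L) → _) := by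
  intro f g h
  funext i
  have := walkOf_castSucc_ne_succ_iff (f := f) (j := f i) i |>.2 rfl
  rw [h] at this
  exact (walkOf_castSucc_ne_succ_iff i |>.1 this).symm

theorem eq_walkOf {p : Fin (n + 1) → Fin L → Bool} (h0 : p 0 = fun _ => false)
    (hstep : ∀ i j, p i.castSucc j ≠ p i.succ j ↔ f i = j) : p = walkOf f := by
  funext t
  induction t using Fin.induction with
  | zero => rw [h0, walkOf_zero]
  | succ i ih =>
    funext j
    have hp := hstep i j
    have hw := walkOf_castSucc_ne_succ_iff (f := f) (j := j) i
    rw [ih] at hp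
    revert hp hw
    cases walkOf f i.castSucc j <;> cases walkOf f i.succ j <;> cases p i.succ j <;> simp

theorem exists_eq_walkOf {p : Fin (n + 1) → Fin L → Bool} (h0 : p 0 = fun _ => false)
    (hadj : ∀ i : Fin n, HypercubeAdj (p i.castSucc) (p i.succ)) : ∃ f, p = walkOf f := by
  choose f hf hu using hadj
  exact ⟨f, eq_walkOf h0 fun i j => ⟨fun h => (hu i j h).symm, fun h => h ▸ hf i⟩⟩

theorem injective_walkOf_of_card_fiber_le_one {r : Fin L}
    (hfib : ∀ j, j ≠ r → #{s | f s = j} ≤ 1)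
    (hsep : ∀ s s' : Fin n, s.val + 1 = s'.val → f s ≠ f s') :
    Function.Injective (walkOf f) := by
  refine Function.Injective.of_lt_imp_ne fun t t' hlt heq => ?_
  have heven j : Even (windowCount f j t t') :=
    (walkOf_apply_eq_iff hlt.le).1 (congrFun heq j)
  -- a letter occurring once cannot occur an even, positive number of times in `[t, t')`
  have hwindow (s : Fin n) (h : t ≤ s.val) (h' : s.val < t') : f s = r := by
    by_contra hs
    have hpos := windowCount_pos (f := f) h h'
    have hle := (windowCount_le_card (f := f) (j := f s) t t').trans (hfib _ hs)
    obtain ⟨k, hk⟩ := heven (f s)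
    omega
  have ht : (t : ℕ) < n := by omega
  by_cases hlen : (t : ℕ) + 1 < t'
  · exact hsep ⟨t, ht⟩ ⟨t + 1, by omega⟩ rfl
      ((hwindow _ le_rfl (by simpa using hlt)).trans (hwindow _ (by simp) hlen).symm)
  · have hr := windowCount_succ (f := f) (j := r) ⟨t, ht⟩
    rw [if_pos (hwindow _ le_rfl (by simpa using hlt))] at hr
    have := heven r
    rw [show (t' : ℕ) = t + 1 by omega, hr] at this
    exact Nat.not_even_one this

theorem ne_of_injective_walkOf (h : Function.Injective (walkOf f))
    (s s' : Fin n) (hs : s.val + 1 = s'.val) : f s ≠ f s' := by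
  intro heq
  have hwin j : windowCount f j s (s + 1 + 1) = 2 * windowCount f j s (s + 1) := by
    have h2 := windowCount_succ (f := f) (j := j) s'
    rw [← hs, ← heq, ← windowCount_succ] at h2
    rw [windowCount_add (Nat.le_succ _) (Nat.le_succ _), h2, two_mul]
  have := @h ⟨s, by omega⟩ ⟨s + 2, by omega⟩ (funext fun j =>
    (walkOf_apply_eq_iff (by simp)).2 (by simp only [hwin]; exact even_two_mul _))
  simp [Fin.ext_iff] at this

end walk

def IsCrossingWord (f : Fin n → Fin L) : Prop :=
  (∀ j, Odd #{s | f s = j}) ∧ ∀ s s' : Fin n, s.val + 1 = s'.val → f s ≠ f s'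

theorem exists_card_fiber_eq_three {f : Fin (L + 2) → Fin L}
    (hodd : ∀ j, Odd #{s | f s = j}) :
    ∃ r, #{s | f s = r} = 3 ∧ ∀ j, j ≠ r → #{s | f s = j} = 1 :=
  exists_eq_three_of_odd_of_sum_eq hodd <| by
    rw [sum_card_fiberwise_eq_card_filter]; simp

theorem isSAPath_walkOf_iff (f : Fin (L + 2) → Fin L) :
    (IsSAPath (L + 2) (walkOf f) ∧ walkOf f (Fin.last _) = fun _ => true) ↔
      IsCrossingWord f := by
  refine ⟨fun ⟨⟨hinj, _⟩, hlast⟩ => ⟨fun j => ?_, ne_of_injective_walkOf hinj⟩,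
    fun ⟨hodd, hsep⟩ => ⟨⟨?_, hypercubeAdj_walkOf⟩, ?_⟩⟩
  · simpa [walkOf_last] using congrFun hlast j
  · obtain ⟨r, -, hr⟩ := exists_card_fiber_eq_three hodd
    exact injective_walkOf_of_card_fiber_le_one (r := r) (fun j hj => (hr j hj).le) hsep
  · funext j; simpa [walkOf_last] using hodd j

section collapse

variable (e : Fin 3 ↪o Fin L)

theorem val_zero_lt_val_one_lt_val_two : (e 0 : ℕ) < e 1 ∧ (e 1 : ℕ) < e 2 :=
  ⟨e.strictMono (by decide), e.strictMono (by decide)⟩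

/- `σ ∘ collapse e` is the word `σ 0, …, σ (L - 1)` with the letter `σ (e 0)` inserted
again at positions `e 1 + 1` and `e 2 + 2`; `skipTwo e` enumerates the other positions
increasingly. -/
def collapse (s : Fin (L + 2)) : Fin L :=
  if h : s.val = e 1 + 1 ∨ s.val = e 2 + 2 then e 0
  else ⟨s.val - (if e 1 + 1 < s.val then 1 else 0) - (if e 2 + 2 < s.val then 1 else 0), by
    have := val_zero_lt_val_one_lt_val_two e
    have := (e 2).isLt
    have := s.isLt
    split_ifs <;> omega⟩

def skipTwo (k : Fin L) : Fin (L + 2) :=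
  ⟨k + (if e 1 < k then 1 else 0) + (if e 2 < k then 1 else 0), by split_ifs <;> omega⟩

theorem val_collapse (s : Fin (L + 2)) : (collapse e s : ℕ) =
    if s.val = e 1 + 1 ∨ s.val = e 2 + 2 then (e 0 : ℕ)
    else s.val - (if e 1 + 1 < s.val then 1 else 0) - (if e 2 + 2 < s.val then 1 else 0) := by
  unfold collapse; split_ifs <;> rfl

theorem val_skipTwo (k : Fin L) :
    (skipTwo e k : ℕ) = k + (if e 1 < k then 1 else 0) + (if e 2 < k then 1 else 0) := rfl

theorem collapse_skipTwo (k : Fin L) : collapse e (skipTwo e k) = k := by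
  have := val_zero_lt_val_one_lt_val_two e
  rw [Fin.ext_iff, val_collapse, val_skipTwo]
  simp only [Fin.lt_def]
  split_ifs <;> omega

theorem collapse_eq_zero_iff (s : Fin (L + 2)) :
    collapse e s = e 0 ↔ s.val = e 0 ∨ s.val = e 1 + 1 ∨ s.val = e 2 + 2 := by
  have := val_zero_lt_val_one_lt_val_two e
  rw [Fin.ext_iff, val_collapse]
  split_ifs <;> omega

theorem collapse_eq_iff_of_ne {k : Fin L} (hk : k ≠ e 0) (s : Fin (L + 2)) :
    collapse e s = k ↔ s = skipTwo e k := by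
  have := val_zero_lt_val_one_lt_val_two e
  have hk' : (k : ℕ) ≠ e 0 := Fin.val_ne_of_ne hk
  rw [Fin.ext_iff, Fin.ext_iff, val_collapse, val_skipTwo]
  simp only [Fin.lt_def]
  split_ifs <;> omega

theorem collapse_ne_of_succ {s s' : Fin (L + 2)} (h : s.val + 1 = s'.val) :
    collapse e s ≠ collapse e s' := by
  have := val_zero_lt_val_one_lt_val_two e
  rw [Ne, Fin.ext_iff, val_collapse, val_collapse]
  split_ifs <;> omega

theorem card_collapse_eq (k : Fin L) :
    #{s | collapse e s = k} = if k = e 0 then 3 else 1 := by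
  split_ifs with hk
  · have := val_zero_lt_val_one_lt_val_two e
    have := (e 2).isLt
    rw [card_eq_three]
    refine ⟨⟨e 0, by omega⟩, ⟨e 1 + 1, by omega⟩, ⟨e 2 + 2, by omega⟩,
      Fin.ne_of_lt (Fin.mk_lt_mk.2 (by omega)), Fin.ne_of_lt (Fin.mk_lt_mk.2 (by omega)),
      Fin.ne_of_lt (Fin.mk_lt_mk.2 (by omega)), ?_⟩
    ext s
    simp only [hk, collapse_eq_zero_iff, mem_filter, mem_univ, true_and, mem_insert,
      mem_singleton, Fin.ext_iff (a := s)]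
  · exact card_eq_one.2 ⟨skipTwo e k, by ext s; simp [collapse_eq_iff_of_ne e hk]⟩

end collapse

theorem card_comp_collapse_eq (σ : Equiv.Perm (Fin L)) (e : Fin 3 ↪o Fin L) (j : Fin L) :
    #{s | σ (collapse e s) = j} = if σ.symm j = e 0 then 3 else 1 := by
  rw [← card_collapse_eq e (σ.symm j)]
  simp_rw [← Equiv.eq_symm_apply]

theorem isCrossingWord_comp_collapse (σ : Equiv.Perm (Fin L)) (e : Fin 3 ↪o Fin L) :
    IsCrossingWord (σ ∘ collapse e) := by
  refine ⟨fun j => ?_, fun s s' h => σ.injective.ne (collapse_ne_of_succ e h)⟩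
  simp only [Function.comp_apply, card_comp_collapse_eq]
  split_ifs <;> decide

theorem comp_collapse_injective :
    Function.Injective fun x : Equiv.Perm (Fin L) × (Fin 3 ↪o Fin L) =>
      x.1 ∘ collapse x.2 := by
  rintro ⟨σ, e⟩ ⟨σ', e'⟩ h
  have hw (s : Fin (L + 2)) : σ (collapse e s) = σ' (collapse e' s) := congrFun h s
  -- the letter occurring three times, and then its positions, are read off the word
  have hrep : σ' (e' 0) = σ (e 0) := by
    have h3 := card_comp_collapse_eq σ e (σ (e 0))
    rw [Equiv.symm_apply_apply, if_pos rfl] at h3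
    simp_rw [hw, card_comp_collapse_eq] at h3
    split_ifs at h3 with h'
    · rw [← h', Equiv.apply_symm_apply]
    · omega
  have hpos (s : Fin (L + 2)) : collapse e s = e 0 ↔ collapse e' s = e' 0 :=
    calc collapse e s = e 0 ↔ σ (collapse e s) = σ (e 0) := σ.injective.eq_iff.symm
      _ ↔ σ' (collapse e' s) = σ' (e' 0) := by rw [hw, hrep]
      _ ↔ _ := σ'.injective.eq_iff
  have he : e = e' := by
    have hpos' (s : ℕ) (hs : s < L + 2) : (s = e 0 ∨ s = e 1 + 1 ∨ s = e 2 + 2) ↔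
        (s = e' 0 ∨ s = e' 1 + 1 ∨ s = e' 2 + 2) := by
      simpa only [collapse_eq_zero_iff] using hpos ⟨s, hs⟩
    have := val_zero_lt_val_one_lt_val_two e
    have := val_zero_lt_val_one_lt_val_two e'
    have := (e 2).isLt
    have := (e' 2).isLt
    have := (hpos' (e 0) (by omega)).1 (by simp)
    have := (hpos' (e 1 + 1) (by omega)).1 (by simp)
    have := (hpos' (e 2 + 2) (by omega)).1 (by simp)
    have := (hpos' (e' 0) (by omega)).2 (by simp)
    have := (hpos' (e' 1 + 1) (by omega)).2 (by simp)
    have := (hpos' (e' 2 + 2) (by omega)).2 (by simp)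
    ext i
    fin_cases i
    exacts [(by omega : (e 0 : ℕ) = e' 0), (by omega : (e 1 : ℕ) = e' 1),
      (by omega : (e 2 : ℕ) = e' 2)]
  subst he
  refine Prod.ext (Equiv.ext fun k => ?_) rfl
  simpa [collapse_skipTwo] using hw (skipTwo e k)

theorem exists_collapse_eq_zero_iff {f : Fin (L + 2) → Fin L} {r : Fin L}
    (hsep : ∀ s s' : Fin (L + 2), s.val + 1 = s'.val → f s ≠ f s')
    (hr3 : #{s | f s = r} = 3) :
    ∃ e : Fin 3 ↪o Fin L, ∀ s, collapse e s = e 0 ↔ f s = r := by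
  set P := orderEmbOfFin _ hr3
  have hP (s : Fin (L + 2)) : f s = r ↔ s = P 0 ∨ s = P 1 ∨ s = P 2 := by
    have : f s = r ↔ s ∈ Set.range P := by simp [P, range_orderEmbOfFin]
    rw [this, Set.mem_range]
    constructor
    · rintro ⟨i, rfl⟩; fin_cases i <;> simp
    · rintro (rfl | rfl | rfl) <;> exact ⟨_, rfl⟩
  have hgap (i j : Fin 3) (hij : i < j) : (P i : ℕ) + 1 < P j := by
    have hlt : (P i : ℕ) < P j := P.strictMono hij
    refine lt_of_le_of_ne hlt fun h => hsep _ _ h ?_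
    rw [(hP _).2 (by fin_cases i <;> simp), (hP _).2 (by fin_cases j <;> simp)]
  have h01 := hgap 0 1 (by decide)
  have h12 := hgap 1 2 (by decide)
  have hP2 := (P 2).isLt
  let e : Fin 3 ↪o Fin L := OrderEmbedding.ofStrictMono
    (fun i => ⟨P i - i, by fin_cases i <;> simp <;> omega⟩)
    (Fin.strictMono_iff_lt_succ.2 fun i => by
      fin_cases i <;> simp [Fin.lt_def] <;> omega)
  have he0 : (e 0 : ℕ) = P 0 := rfl
  have he1 : (e 1 : ℕ) + 1 = P 1 := by simp [e]; omega
  have he2 : (e 2 : ℕ) + 2 = P 2 := by simp [e]; omega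
  refine ⟨e, fun s => ?_⟩
  rw [collapse_eq_zero_iff, hP, he0, he1, he2]
  simp only [Fin.ext_iff]

theorem exists_comp_collapse_eq {f : Fin (L + 2) → Fin L} (hf : IsCrossingWord f) :
    ∃ (σ : Equiv.Perm (Fin L)) (e : Fin 3 ↪o Fin L), σ ∘ collapse e = f := by
  obtain ⟨hodd, hsep⟩ := hf
  obtain ⟨r, hr3, hr1⟩ := exists_card_fiber_eq_three hodd
  obtain ⟨e, hcol⟩ := exists_collapse_eq_zero_iff hsep hr3
  have hinj : Function.Injective (f ∘ skipTwo e) := by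
    intro k k' hkk
    simp only [Function.comp_apply] at hkk
    by_cases hk : f (skipTwo e k) = r
    · rw [← collapse_skipTwo e k, ← collapse_skipTwo e k', (hcol _).2 hk,
        (hcol _).2 (hkk ▸ hk)]
    · have := card_le_one.1 (hr1 _ hk).le (skipTwo e k) (by simp) (skipTwo e k') (by simp [hkk])
      rw [← collapse_skipTwo e k, this, collapse_skipTwo]
  refine ⟨Equiv.ofBijective _ (Finite.injective_iff_bijective.1 hinj), e, funext fun s => ?_⟩
  change f (skipTwo e (collapse e s)) = f s
  by_cases hs : collapse e s = e 0
  · rw [hs, (hcol _).1 (collapse_skipTwo e _), (hcol s).1 hs]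
  · rw [← (collapse_eq_iff_of_ne e hs s).1 rfl]

theorem card_isCrossingWord :
    Nat.card {f : Fin (L + 2) → Fin L // IsCrossingWord f} = L.factorial * L.choose 3 := by
  rw [← Nat.card_eq_of_bijective
    (fun x : Equiv.Perm (Fin L) × (Fin 3 ↪o Fin L) =>
      (⟨x.1 ∘ collapse x.2, isCrossingWord_comp_collapse x.1 x.2⟩ :
        {f : Fin (L + 2) → Fin L // IsCrossingWord f}))
    ⟨fun x y h => comp_collapse_injective (congrArg Subtype.val h), fun f => ?_⟩]
  · rw [Nat.card_prod, Nat.card_perm, Nat.card_congr Set.powersetCard.ofFinEmbEquiv,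
      Set.powersetCard.card, Nat.card_fin]
  · obtain ⟨σ, e, h⟩ := exists_comp_collapse_eq f.2
    exact ⟨(σ, e), Subtype.ext h⟩

theorem card_path_eq_card_isCrossingWord :
    Nat.card {p : Fin (L + 2 + 1) → Fin L → Bool // IsSAPath (L + 2) p ∧
      p 0 = (fun _ => false) ∧ p (Fin.last (L + 2)) = (fun _ => true)} =
    Nat.card {f : Fin (L + 2) → Fin L // IsCrossingWord f} := by
  refine (Nat.card_eq_of_bijective (fun f => ⟨walkOf f.1,
    ((isSAPath_walkOf_iff f.1).2 f.2).1, walkOf_zero, ((isSAPath_walkOf_iff f.1).2 f.2).2⟩)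
    ⟨fun f g h => Subtype.ext (walkOf_injective (congrArg Subtype.val h)), ?_⟩).symm
  rintro ⟨p, hp, h0, hlast⟩
  obtain ⟨f, rfl⟩ := exists_eq_walkOf h0 hp.2
  exact ⟨⟨f, (isSAPath_walkOf_iff f).1 ⟨hp, hlast⟩⟩, rfl⟩

end Hypercube

theorem stmt3_general (L : ℕ) :
    6 * Nat.card {p : Fin (L+2+1) → Fin L → Bool //
      IsSAPath (L+2) p ∧ p 0 = (fun _ => false) ∧ p (Fin.last (L+2)) = (fun _ => true)}
      = L.factorial * (L * (L-1) * (L-2)) := by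
  rw [Hypercube.card_path_eq_card_isCrossingWord, Hypercube.card_isCrossingWord,
    mul_left_comm, show 6 * L.choose 3 = L.descFactorial 3 from
      (Nat.descFactorial_eq_factorial_mul_choose L 3).symm]
  simp only [Nat.descFactorial_succ, Nat.descFactorial_zero, Nat.sub_zero]
  ring

/-- The number of self-avoiding paths of length `L+2` (one backstep) from
`(0,…,0)` to `(1,…,1)` on the `L`-hypercube equals `L! · L(L-1)(L-2)/6`
(stated multiplied by 6 to avoid division). -/
theorem stmt3 (L : ℕ) (hL : 1 ≤ L) :
    6 * Nat.card {p : Fin (L+2+1) → Fin L → Bool //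
      IsSAPath (L+2) p ∧ p 0 = (fun _ => false) ∧ p (Fin.last (L+2)) = (fun _ => true)}
      = L.factorial * (L * (L-1) * (L-2)) :=
  stmt3_general L
end

section
/- Let Theta be the number of open (strictly fitness-increasing) self-avoiding paths from the all-zeros vertex (with fitness x) to the all-ones vertex (with fitness 1) on the L-hypercube, where interior vertices have i.i.d. uniform [0,1] fitnesses. Then E[Theta] <= L * sinh(1-x)^L * cosh(1-x)/sinh(1-x). -/
/-- `A L p`: number of self-avoiding paths of length `L+2p` from all-zeros to
all-ones on the `L`-hypercube. -/
noncomputable def A (L p : ℕ) : ℕ :=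
  Nat.card {f : Fin (L + 2*p + 1) → Fin L → Bool //
    IsSAPath (L + 2*p) f ∧ f 0 = (fun _ => false) ∧
      f (Fin.last (L + 2*p)) = (fun _ => true)}

open Finset Real

noncomputable def HypercubeAdj.flip {L : ℕ} {u v : Fin L → Bool} (h : HypercubeAdj u v) : Fin L :=
  h.exists.choose

lemma HypercubeAdj.apply_eq {L : ℕ} {u v : Fin L → Bool} (h : HypercubeAdj u v) (i : Fin L) :
    v i = if i = h.flip then !u i else u i := by
  have hflip : u h.flip ≠ v h.flip := h.exists.choose_spec
  split_ifs with hi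
  · exact hi ▸ Bool.eq_not.2 hflip.symm
  · by_contra hne
    exact hi (h.unique (Ne.symm hne) hflip)

lemma card_filter_le_and {α : Type*} [Fintype α] [LinearOrder α] (P : α → Prop) [DecidablePred P]
    (k : α) :
    #{j | j ≤ k ∧ P j} = #{j | j < k ∧ P j} + if P k then 1 else 0 := by
  simp only [le_iff_lt_or_eq, or_and_right, filter_or]
  rw [card_union_of_disjoint (disjoint_filter.2 fun j _ hj hj' => hj.1.ne hj'.1)]
  congr 1
  split_ifs with h <;> simp [filter_and, filter_eq', h]

section FlipSequence

variable {L n : ℕ} {f : Fin (n + 1) → Fin L → Bool}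

noncomputable def flipSeq (hf : ∀ j : Fin n, HypercubeAdj (f j.castSucc) (f j.succ)) :
    Fin n → Fin L :=
  fun j => (hf j).flip

variable (hf : ∀ j : Fin n, HypercubeAdj (f j.castSucc) (f j.succ))

lemma apply_eq_true_iff_odd_card_flipSeq (h0 : f 0 = fun _ => false) (k : Fin (n + 1))
    (i : Fin L) : f k i = true ↔ Odd #{j | j.castSucc < k ∧ flipSeq hf j = i} := by
  induction k using Fin.induction with
  | zero => simp [h0]
  | succ k ih =>
    simp only [Fin.castSucc_lt_succ_iff, Fin.castSucc_lt_castSucc_iff] at ih ⊢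
    rw [(hf k).apply_eq, card_filter_le_and]
    split_ifs with hi hk hk
    · rw [Nat.odd_add_one, ← ih]
      simp
    · exact absurd hi.symm hk
    · exact absurd hk.symm hi
    · rw [add_zero, ih]

lemma odd_card_flipSeq (h0 : f 0 = fun _ => false) (h1 : f (Fin.last n) = fun _ => true)
    (i : Fin L) : Odd #{j | flipSeq hf j = i} := by
  simpa [h1, Fin.castSucc_lt_last] using apply_eq_true_iff_odd_card_flipSeq hf h0 (Fin.last n) i

lemma eq_of_flipSeq_eq {g : Fin (n + 1) → Fin L → Bool}
    (hg : ∀ j : Fin n, HypercubeAdj (g j.castSucc) (g j.succ))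
    (hf0 : f 0 = fun _ => false) (hg0 : g 0 = fun _ => false) (h : flipSeq hf = flipSeq hg) :
    f = g := by
  ext k i
  rw [Bool.eq_iff_iff, apply_eq_true_iff_odd_card_flipSeq hf hf0,
    apply_eq_true_iff_odd_card_flipSeq hg hg0, h]

end FlipSequence

lemma Fintype.prod_comp_eq_prod_pow_card {ι κ M : Type*} [Fintype ι] [Fintype κ] [DecidableEq ι]
    [CommMonoid M] (g : ι → M) (s : κ → ι) : ∏ j, g (s j) = ∏ i, g i ^ #{j | s j = i} := by
  rw [← Finset.prod_fiberwise univ s fun j => g (s j)]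
  refine Finset.prod_congr rfl fun i _ => ?_
  rw [Finset.prod_congr rfl fun j hj => congrArg g (mem_filter.1 hj).2, Finset.prod_const]

lemma sum_one_neg_one_pow (k : ℕ) :
    ∑ b ∈ ({1, -1} : Finset ℝ), b ^ k = if Even k then 2 else 0 := by
  rw [sum_pair (by norm_num)]
  split_ifs with hk
  · rw [hk.neg_one_pow]; norm_num
  · rw [(Nat.not_even_iff_odd.1 hk).neg_one_pow]; norm_num

section OddWords

variable (ι : Type*) [Fintype ι] [DecidableEq ι]

def oddWords (n : ℕ) : Finset (Fin n → ι) := {s | ∀ i, Odd #{j | s j = i}}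

noncomputable def signVectors : Finset (ι → ℝ) := Fintype.piFinset fun _ => {1, -1}

lemma two_pow_mul_card_oddWords (n : ℕ) :
    2 ^ Fintype.card ι * (#(oddWords ι n) : ℝ) =
      ∑ σ ∈ signVectors ι, (∏ i, σ i) * (∑ i, σ i) ^ n := by
  symm
  calc ∑ σ ∈ signVectors ι, (∏ i, σ i) * (∑ i, σ i) ^ n
      = ∑ s : Fin n → ι, ∑ σ ∈ signVectors ι, ∏ i, σ i ^ (#{j | s j = i} + 1) := by
        simp only [Fintype.sum_pow, mul_sum]
        rw [sum_comm]
        refine sum_congr rfl fun s _ => sum_congr rfl fun σ _ => ?_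
        simp only [Fintype.prod_comp_eq_prod_pow_card σ s, pow_succ, prod_mul_distrib, mul_comm]
    _ = ∑ s : Fin n → ι, ∏ i, if Odd #{j | s j = i} then (2 : ℝ) else 0 := by
        refine sum_congr rfl fun s _ => ?_
        rw [signVectors, ← prod_univ_sum (fun _ => {1, -1}) fun i b => b ^ (#{j | s j = i} + 1)]
        simp only [sum_one_neg_one_pow, Nat.even_add_one, Nat.not_even_iff_odd]
    _ = 2 ^ Fintype.card ι * #(oddWords ι n) := by
        simp only [Fintype.prod_ite_zero, prod_const, card_univ, oddWords]
        rw [← sum_boole, mul_sum]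
        simp

lemma sinh_pow_card_eq_sum (t : ℝ) :
    sinh t ^ Fintype.card ι =
      2⁻¹ ^ Fintype.card ι * ∑ σ ∈ signVectors ι, (∏ i, σ i) * exp ((∑ i, σ i) * t) := by
  have hsinh : sinh t = 2⁻¹ * ∑ b ∈ ({1, -1} : Finset ℝ), b * exp (b * t) := by
    rw [sinh_eq, sum_pair (by norm_num)]
    ring_nf
  rw [hsinh, mul_pow]
  congr 1
  rw [← card_univ, ← prod_const, prod_univ_sum, signVectors]
  simp only [prod_mul_distrib, ← exp_sum, sum_mul]

lemma card_mul_sinh_pow_mul_cosh_eq_sum (t : ℝ) :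
    Fintype.card ι * sinh t ^ (Fintype.card ι - 1) * cosh t =
      2⁻¹ ^ Fintype.card ι *
        ∑ σ ∈ signVectors ι, (∏ i, σ i) * (∑ i, σ i) * exp ((∑ i, σ i) * t) := by
  have hexp (σ : ι → ℝ) : HasDerivAt (fun u => (∏ i, σ i) * exp ((∑ i, σ i) * u))
      ((∏ i, σ i) * (∑ i, σ i) * exp ((∑ i, σ i) * t)) t :=
    (((hasDerivAt_id' t).const_mul _).exp.const_mul _).congr_deriv (by ring)
  have hsum := (HasDerivAt.fun_sum fun σ (_ : σ ∈ signVectors ι) => hexp σ).const_mul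
    (2⁻¹ ^ Fintype.card ι)
  rw [← funext (sinh_pow_card_eq_sum ι)] at hsum
  exact ((hasDerivAt_sinh t).pow _).unique hsum

lemma hasSum_card_oddWords_succ (y : ℝ) :
    HasSum (fun m : ℕ => (#(oddWords ι (m + 1)) : ℝ) * y ^ m / m.factorial)
      (Fintype.card ι * sinh y ^ (Fintype.card ι - 1) * cosh y) := by
  have hterm (m : ℕ) : (#(oddWords ι (m + 1)) : ℝ) * y ^ m / m.factorial =
      2⁻¹ ^ Fintype.card ι * ∑ σ ∈ signVectors ι,
        (∏ i, σ i) * (∑ i, σ i) * ((∑ i, σ i) * y) ^ m / m.factorial := by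
    have hcard : (#(oddWords ι (m + 1)) : ℝ) =
        2⁻¹ ^ Fintype.card ι * ∑ σ ∈ signVectors ι, (∏ i, σ i) * (∑ i, σ i) ^ (m + 1) := by
      rw [← two_pow_mul_card_oddWords, ← mul_assoc, ← mul_pow]
      norm_num
    rw [hcard, mul_assoc, mul_div_assoc, sum_mul, sum_div]
    congr 1
    refine sum_congr rfl fun σ _ => ?_
    ring
  simp only [hterm, card_mul_sinh_pow_mul_cosh_eq_sum]
  refine HasSum.mul_left _ (hasSum_sum fun σ _ => ?_)
  simpa only [mul_div_assoc, ← Real.exp_eq_exp_ℝ] using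
    (NormedSpace.expSeries_div_hasSum_exp ((∑ i, σ i) * y)).mul_left ((∏ i, σ i) * ∑ i, σ i)

end OddWords

lemma A_le_card_oddWords (L p : ℕ) : A L p ≤ #(oddWords (Fin L) (L + 2 * p)) := by
  rw [A, ← Nat.card_eq_finsetCard]
  refine Nat.card_le_card_of_injective
    (fun f => ⟨flipSeq f.2.1.2, by simpa [oddWords] using odd_card_flipSeq _ f.2.2.1 f.2.2.2⟩) ?_
  rintro ⟨f, hf⟩ ⟨g, hg⟩ h
  exact Subtype.ext (eq_of_flipSeq_eq hf.1.2 hg.1.2 hf.2.1 hg.2.1 (congrArg Subtype.val h))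

/-- The expected number of open paths,
`E^x[Θ] = ∑_p A_{L,p} (1-x)^{L+2p-1}/(L+2p-1)!`, satisfies
`E^x[Θ] ≤ L · sinh(1-x)^L · cosh(1-x)/sinh(1-x)`. -/
theorem stmt7 (L : ℕ) (hL : 1 ≤ L) (x : ℝ) (hx : x ∈ Set.Ico (0:ℝ) 1) :
    ∑' p : ℕ, (A L p : ℝ) * (1 - x) ^ (L + 2*p - 1) / (L + 2*p - 1).factorial
      ≤ L * Real.sinh (1-x) ^ L * (Real.cosh (1-x) / Real.sinh (1-x)) := by
  set y := 1 - x
  have hy : 0 < y := sub_pos.2 hx.2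
  have hW := hasSum_card_oddWords_succ (Fin L) y
  rw [Fintype.card_fin] at hW
  have hinj : Function.Injective fun p : ℕ => L - 1 + 2 * p := fun p q h => by simp_all
  have hterm (p : ℕ) : (A L p : ℝ) * y ^ (L + 2 * p - 1) / (L + 2 * p - 1).factorial ≤
      #(oddWords (Fin L) (L - 1 + 2 * p + 1)) * y ^ (L - 1 + 2 * p) /
        (L - 1 + 2 * p).factorial := by
    rw [show L - 1 + 2 * p = L + 2 * p - 1 by omega, Nat.sub_add_cancel (by omega)]
    gcongr
    exact A_le_card_oddWords L p
  have hsummable := (hW.summable.comp_injective hinj).of_nonneg_of_le (fun _ => by positivity) hterm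
  have hsinh : sinh y ≠ 0 := (sinh_pos_iff.2 hy).ne'
  calc _ ≤ ∑' m : ℕ, (#(oddWords (Fin L) (m + 1)) : ℝ) * y ^ m / m.factorial :=
        hsummable.tsum_le_tsum_of_inj _ hinj (fun _ _ => by positivity) hterm hW.summable
    _ = L * sinh y ^ (L - 1) * cosh y := hW.tsum_eq
    _ = L * sinh y ^ L * (cosh y / sinh y) := by
        rw [← pow_sub_one_mul (by omega : L ≠ 0)]
        field_simp
end

section
/- With N_{L,p} defined by the recurrence N_{1,p} = [p=0] and N_{L+1,p} = sum over q from 0 to p of binomial(L+1+2p-2q, 2q+1) * N_{L,p-q}, we have N_{L,p} <= A_{L,p}, where A_{L,p} is the number of self-avoiding paths of length L+2p from all-zeros to all-ones in the L-hypercube. -/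
/-- `N_{1,p} = [p=0]`, `N_{L+1,p} = ∑_{q=0}^p binom(L+1+2p-2q, 2q+1) N_{L,p-q}`. -/
def Nrec : ℕ → ℕ → ℕ
  | 0, _ => 0
  | 1, p => if p = 0 then 1 else 0
  | (L+2), p => ∑ q ∈ Finset.range (p+1),
      ((L+2) + 2*p - 2*q).choose (2*q + 1) * Nrec (L+1) (p - q)

/-!
Given a self-avoiding path `f` of length `n` on the `M`-cube and a set `S` of `k` of its `n + 1`
vertices, walk along `f` and, on reaching each vertex `f s` with `s ∈ S`, insert a step toggling a
new coordinate. The vertices of the result are pairs (vertex of `f`, parity of the toggles so far);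
since no two toggles are consecutive, distinct times give distinct pairs, so the result is a
self-avoiding path of length `n + k` on the `(M+1)`-cube, from `0` to `1` when `k` is odd, and
`(f, S)` can be read back from it. With `n = M + 2(p - q)` and `k = 2q + 1` this injects a set of
size `∑_q binom(M + 2(p - q) + 1, 2q + 1) A_{M,p-q}` into the paths counted by `A_{M+1,p}`, which is
the recurrence for `N` with `≤` in place of `=`. The base case is the same injection for `M = 0`.
-/

open Finset

namespace HypercubeLift

variable (S : Finset ℕ)

/- In the lifted path the toggle at `s ∈ S` is step number `s + rank S s`; `toggleCount S j` is the
number of toggles among the first `j` steps and `basePos S j` the position reached along the base path. -/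

def rank (i : ℕ) : ℕ := #{t ∈ S | t < i}

def toggleCount (j : ℕ) : ℕ := #{s ∈ S | s + rank S s < j}

def basePos (j : ℕ) : ℕ := j - toggleCount S j

variable {S}

lemma rank_mono : Monotone (rank S) := fun _ _ h =>
  card_le_card <| monotone_filter_right S fun _ _ ht => lt_of_lt_of_le ht h

lemma rank_lt_rank {s i : ℕ} (hs : s ∈ S) (h : s < i) : rank S s < rank S i :=
  card_lt_card <| (ssubset_iff_of_subset <| monotone_filter_right S fun _ _ ht => ht.trans h).2
    ⟨s, mem_filter.2 ⟨hs, h⟩, by simp⟩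

lemma rank_lt_card {s : ℕ} (hs : s ∈ S) : rank S s < #S :=
  card_lt_card <| filter_ssubset.2 ⟨s, hs, lt_irrefl s⟩

lemma toggleCount_mono : Monotone (toggleCount S) := fun _ _ h =>
  card_le_card <| monotone_filter_right S fun _ _ ht => lt_of_lt_of_le ht h

lemma toggleCount_le_card (j : ℕ) : toggleCount S j ≤ #S := card_filter_le _ _

/-- Distinct toggles sit at least two steps apart, since `rank` increases between them. -/
lemma toggleCount_add_two_le (j : ℕ) : toggleCount S (j + 2) ≤ toggleCount S j + 1 := by
  have hsplit : {s ∈ S | s + rank S s < j + 2} ⊆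
      {s ∈ S | s + rank S s < j} ∪ {s ∈ S | j ≤ s + rank S s ∧ s + rank S s < j + 2} := by
    intro s hs
    obtain ⟨hs, hlt⟩ := mem_filter.1 hs
    by_cases hj : s + rank S s < j
    · exact mem_union_left _ (mem_filter.2 ⟨hs, hj⟩)
    · exact mem_union_right _ (mem_filter.2 ⟨hs, by omega, hlt⟩)
  have hwindow : #{s ∈ S | j ≤ s + rank S s ∧ s + rank S s < j + 2} ≤ 1 := by
    refine card_le_one.2 fun a ha b hb => ?_
    simp only [mem_filter] at ha hb
    by_contra hab
    rcases lt_or_gt_of_ne hab with h | h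
    · have := rank_lt_rank ha.1 h; omega
    · have := rank_lt_rank hb.1 h; omega
  exact (card_le_card hsplit).trans <| (card_union_le _ _).trans (Nat.add_le_add_left hwindow _)

lemma toggleCount_succ_le (j : ℕ) : toggleCount S (j + 1) ≤ toggleCount S j + 1 :=
  (toggleCount_mono (Nat.le_succ _)).trans (toggleCount_add_two_le j)

lemma toggleCount_succ (j : ℕ) :
    toggleCount S (j + 1) = toggleCount S j ∨ toggleCount S (j + 1) = toggleCount S j + 1 := by
  have := toggleCount_mono (S := S) (Nat.le_add_right j 1)
  have := toggleCount_succ_le (S := S) j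
  omega

@[simp] lemma toggleCount_zero : toggleCount S 0 = 0 := by simp [toggleCount]

lemma toggleCount_le_self (j : ℕ) : toggleCount S j ≤ j := by
  induction j with
  | zero => simp
  | succ j ih => have := toggleCount_succ_le (S := S) j; omega

lemma basePos_mono : Monotone (basePos S) := monotone_nat_of_le_succ fun j => by
  have := toggleCount_succ_le (S := S) j
  have := toggleCount_le_self (S := S) j
  simp only [basePos]; omega

lemma toggleCount_slot (i : ℕ) : toggleCount S (i + rank S i) = rank S i := by
  refine congrArg card (filter_congr fun s hs => ⟨fun h => ?_, fun h => ?_⟩)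
  · by_contra hsi
    have := rank_mono (S := S) (not_lt.1 hsi)
    omega
  · have := rank_lt_rank hs h
    omega

lemma basePos_slot (i : ℕ) : basePos S (i + rank S i) = i := by
  simp [basePos, toggleCount_slot]

lemma toggleCount_slot_succ {s : ℕ} (hs : s ∈ S) :
    toggleCount S (s + rank S s + 1) = rank S s + 1 := by
  have hle := toggleCount_succ_le (S := S) (s + rank S s)
  rw [toggleCount_slot] at hle
  refine le_antisymm hle ?_
  have hsub : insert s {t ∈ S | t + rank S t < s + rank S s} ⊆
      {t ∈ S | t + rank S t < s + rank S s + 1} :=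
    insert_subset (mem_filter.2 ⟨hs, by omega⟩) <|
      monotone_filter_right S fun _ _ ht => Nat.lt_succ_of_lt ht
  have := card_le_card hsub
  rwa [card_insert_of_notMem (by simp), ← toggleCount, toggleCount_slot] at this

lemma basePos_mem_of_toggleCount_succ {j : ℕ}
    (h : toggleCount S (j + 1) = toggleCount S j + 1) : basePos S j ∈ S := by
  obtain ⟨s, hs, hsj⟩ := exists_mem_notMem_of_card_lt_card (s := {s ∈ S | s + rank S s < j})
    (t := {s ∈ S | s + rank S s < j + 1}) (by unfold toggleCount at h; omega)
  simp only [mem_filter, not_and, not_lt] at hs hsj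
  have hslot : s + rank S s = j := by have := hsj hs.1; omega
  rw [← hslot, basePos_slot]
  exact hs.1

lemma mem_iff_exists_toggle (s : ℕ) :
    s ∈ S ↔ ∃ j, toggleCount S (j + 1) = toggleCount S j + 1 ∧ basePos S j = s :=
  ⟨fun hs => ⟨s + rank S s, by rw [toggleCount_slot_succ hs, toggleCount_slot], basePos_slot s⟩,
    fun ⟨_, hj, hs⟩ => hs ▸ basePos_mem_of_toggleCount_succ hj⟩

lemma toggleCount_injective : Function.Injective (toggleCount : Finset ℕ → ℕ → ℕ) :=
  fun S S' h => ext fun s => by simp only [mem_iff_exists_toggle, basePos, h]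

variable {n : ℕ}

lemma toggleCount_of_le (hS : S ⊆ range (n + 1)) {j : ℕ} (hj : n + #S ≤ j) :
    toggleCount S j = #S := by
  refine congrArg card (filter_true_of_mem fun s hs => ?_)
  have := mem_range.1 (hS hs)
  have := rank_lt_card hs
  omega

lemma basePos_le (hS : S ⊆ range (n + 1)) {j : ℕ} (hj : j ≤ n + #S) : basePos S j ≤ n := by
  refine (basePos_mono hj).trans_eq ?_
  rw [basePos, toggleCount_of_le hS le_rfl, Nat.add_sub_cancel]


end HypercubeLift

lemma HypercubeAdj.snoc {M : ℕ} {u v : Fin M → Bool} (h : HypercubeAdj u v) (a : Bool) :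
    HypercubeAdj (Fin.snoc u a : Fin (M + 1) → Bool) (Fin.snoc v a) := by
  obtain ⟨i, hi, huniq⟩ := h
  refine ⟨i.castSucc, by simpa using hi, fun k hk => ?_⟩
  induction k using Fin.lastCases with
  | last => simp at hk
  | cast k => rw [huniq k (by simpa using hk)]

lemma hypercubeAdj_snoc_of_ne {M : ℕ} (u : Fin M → Bool) {a b : Bool} (h : a ≠ b) :
    HypercubeAdj (Fin.snoc u a : Fin (M + 1) → Bool) (Fin.snoc u b) :=
  ⟨Fin.last M, by simpa using h, fun k hk => by
    induction k using Fin.lastCases with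
    | last => rfl
    | cast k => simp at hk⟩

lemma snoc_const {M : ℕ} (a : Bool) : (Fin.snoc (fun _ => a) a : Fin (M + 1) → Bool) = fun _ => a :=
  funext fun k => by induction k using Fin.lastCases <;> simp

namespace HypercubeLift

variable {M n : ℕ} {f : Fin (n + 1) → Fin M → Bool} {S : Finset ℕ}

/-- The clamp only matters past the end `n + #S` of the lifted path. -/
def lift (f : Fin (n + 1) → Fin M → Bool) (S : Finset ℕ) (j : ℕ) : Fin (M + 1) → Bool :=
  Fin.snoc (f (Fin.clamp (basePos S j) n)) (decide (Odd (toggleCount S j)))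

lemma lift_eq {j : ℕ} {i : Fin (n + 1)} (hi : basePos S j = i) :
    lift f S j = Fin.snoc (f i) (decide (Odd (toggleCount S j))) := by
  have : Fin.clamp (basePos S j) n = i := Fin.ext (by simp [Fin.clamp, hi, Nat.le_of_lt_succ i.2])
  rw [lift, this]

lemma lift_zero (h0 : f 0 = fun _ => false) : lift f S 0 = fun _ => false := by
  rw [lift_eq (i := 0) (by simp [basePos]), h0, toggleCount_zero]
  simpa using snoc_const false

lemma lift_top (hS : S ⊆ range (n + 1)) (hlast : f (Fin.last n) = fun _ => true)
    (hodd : Odd #S) : lift f S (n + #S) = fun _ => true := by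
  rw [lift_eq (i := Fin.last n) (by simp [basePos, toggleCount_of_le hS le_rfl]), hlast,
    toggleCount_of_le hS le_rfl]
  simpa [hodd] using snoc_const true

lemma lift_adj (hf : IsSAPath n f) (hS : S ⊆ range (n + 1)) {j : ℕ} (hj : j < n + #S) :
    HypercubeAdj (lift f S j) (lift f S (j + 1)) := by
  have hle := basePos_le hS hj.le
  have hle' := basePos_le hS (show j + 1 ≤ n + #S from hj)
  have := toggleCount_le_self (S := S) j
  rcases toggleCount_succ (S := S) j with hstay | htoggle
  · have hlt : basePos S j < n := by simp only [basePos] at hle' ⊢; omega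
    rw [lift_eq (i := (⟨basePos S j, hlt⟩ : Fin n).castSucc) rfl,
      lift_eq (i := (⟨basePos S j, hlt⟩ : Fin n).succ) (by simp [basePos]; omega), hstay]
    exact (hf.2 _).snoc _
  · rw [lift_eq (i := ⟨basePos S j, by omega⟩) rfl,
      lift_eq (i := ⟨basePos S j, by omega⟩) (by simp [basePos]; omega), htoggle]
    exact hypercubeAdj_snoc_of_ne _ (by rw [Ne, decide_eq_decide, Nat.odd_add_one]; tauto)

lemma lift_injOn (hf : Function.Injective f) (hS : S ⊆ range (n + 1)) :
    Set.InjOn (lift f S) (Set.Iic (n + #S)) := by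
  suffices key : ∀ j j', j < j' → j' ≤ n + #S → lift f S j ≠ lift f S j' by
    intro j hj j' hj' h
    by_contra hne
    rcases lt_or_gt_of_ne hne with hlt | hlt
    · exact key j j' hlt hj' h
    · exact key j' j hlt hj h.symm
  intro j j' hlt hj' h
  have hle := basePos_le hS (hlt.le.trans hj')
  have hle' := basePos_le hS hj'
  rw [lift_eq (i := ⟨basePos S j, by omega⟩) rfl, lift_eq (i := ⟨basePos S j', by omega⟩) rfl,
    Fin.snoc_inj] at h
  have hbase : basePos S j = basePos S j' := congrArg Fin.val (hf h.1)
  have hpar : Odd (toggleCount S j) ↔ Odd (toggleCount S j') := by simpa using h.2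
  have := toggleCount_le_self (S := S) j
  have := toggleCount_le_self (S := S) j'
  rcases Nat.lt_or_ge j' (j + 2) with hj2 | hj2
  · obtain rfl : j' = j + 1 := by omega
    have htoggle : toggleCount S (j + 1) = toggleCount S j + 1 := by
      simp only [basePos] at hbase; omega
    rw [htoggle, Nat.odd_add_one] at hpar
    tauto
  · have h1 := basePos_mono (S := S) (Nat.le_add_right j 2)
    have h2 := basePos_mono (S := S) hj2
    have := toggleCount_add_two_le (S := S) j
    simp only [basePos] at h1 h2 hbase
    omega


lemma isSAPath_lift (hf : IsSAPath n f) (hS : S ⊆ range (n + 1)) {T : ℕ} (hT : n + #S = T) :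
    IsSAPath T fun j : Fin (T + 1) => lift f S j :=
  ⟨fun j j' h => Fin.ext <| lift_injOn hf.1 hS (by simp; omega) (by simp; omega) h,
    fun j => lift_adj hf hS (by simp; omega)⟩

section Recovery

variable {n' T : ℕ} {f' : Fin (n' + 1) → Fin M → Bool} {S' : Finset ℕ}

/-- The last coordinate of a lift is the parity of the toggle count, which moves by at most one
per step; so the toggle count can be read off the lift. -/
lemma toggleCount_eq_of_lift_eq (h : ∀ j ≤ T, lift f S j = lift f' S' j) :
    ∀ j ≤ T, toggleCount S j = toggleCount S' j := by
  intro j hj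
  induction j with
  | zero => simp
  | succ j ih =>
    have hpar := congrFun (h (j + 1) hj) (Fin.last M)
    simp only [lift, Fin.snoc_last, decide_eq_decide, Nat.odd_iff] at hpar
    have := ih (by omega)
    rcases toggleCount_succ (S := S) j with h1 | h1 <;>
      rcases toggleCount_succ (S := S') j with h2 | h2 <;> omega

lemma set_eq_of_lift_eq (hS : S ⊆ range (n + 1)) (hS' : S' ⊆ range (n' + 1))
    (hT : n + #S = T) (hT' : n' + #S' = T) (h : ∀ j ≤ T, lift f S j = lift f' S' j) :
    S = S' := by
  have heq := toggleCount_eq_of_lift_eq h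
  have hcard : #S = #S' := by
    rw [← toggleCount_of_le hS hT.le, ← toggleCount_of_le hS' hT'.le]
    exact heq T le_rfl
  refine toggleCount_injective (funext fun j => ?_)
  rcases le_or_gt j T with hj | hj
  · exact heq j hj
  · rw [toggleCount_of_le hS (by omega), toggleCount_of_le hS' (by omega), hcard]

lemma path_eq_of_lift_eq {g : Fin (n + 1) → Fin M → Bool}
    (h : ∀ j ≤ n + #S, lift f S j = lift g S j) : f = g := by
  funext i
  have hi := h (i + rank S i) (by have := i.2; have : rank S i ≤ #S := card_filter_le _ _; omega)
  rwa [lift_eq (basePos_slot i), lift_eq (basePos_slot i), Fin.snoc_inj, and_iff_left rfl] at hi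

end Recovery

end HypercubeLift

open HypercubeLift

abbrev SAPaths (L p : ℕ) : Type :=
  {f : Fin (L + 2*p + 1) → Fin L → Bool //
    IsSAPath (L + 2*p) f ∧ f 0 = (fun _ => false) ∧ f (Fin.last (L + 2*p)) = (fun _ => true)}

/-- A path of length `M + 2(p - q)` together with the `2q + 1` of its vertices where a step in
a new coordinate is inserted. -/
abbrev LiftData (M p : ℕ) : Type :=
  (q : Fin (p + 1)) × powersetCard (2 * q + 1) (range (M + 2 * (p - q) + 1)) × SAPaths M (p - q)

section Lifting

variable {M p : ℕ}

lemma length_add_card {q : Fin (p + 1)} {S : Finset ℕ}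
    (hS : S ∈ powersetCard (2 * q + 1) (range (M + 2 * (p - q) + 1))) :
    M + 2 * (p - q) + #S = M + 1 + 2 * p := by
  rw [(mem_powersetCard.1 hS).2]
  have := q.2
  omega

def liftPath : LiftData M p → SAPaths (M + 1) p
  | ⟨q, ⟨S, hS⟩, f⟩ =>
    ⟨fun j => lift f.1 S j, isSAPath_lift f.2.1 (mem_powersetCard.1 hS).1 (length_add_card hS),
      lift_zero f.2.2.1, by
        show lift f.1 S (Fin.last _).val = _
        rw [Fin.val_last, ← length_add_card hS]
        exact lift_top (mem_powersetCard.1 hS).1 f.2.2.2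
          ((mem_powersetCard.1 hS).2 ▸ odd_two_mul_add_one _)⟩

lemma liftPath_injective : Function.Injective (liftPath (M := M) (p := p)) := by
  rintro ⟨q, ⟨S, hS⟩, ⟨f, _⟩⟩ ⟨q', ⟨S', hS'⟩, ⟨f', _⟩⟩ h
  have hlift : ∀ j ≤ M + 1 + 2 * p, lift f S j = lift f' S' j := fun j hj =>
    congrFun (congrArg Subtype.val h) ⟨j, Nat.lt_succ_of_le hj⟩
  obtain rfl : S = S' := set_eq_of_lift_eq (mem_powersetCard.1 hS).1 (mem_powersetCard.1 hS').1
    (length_add_card hS) (length_add_card hS') hlift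
  obtain rfl : q = q' := by
    have := (mem_powersetCard.1 hS).2.symm.trans (mem_powersetCard.1 hS').2
    exact Fin.ext (by omega)
  obtain rfl : f = f' := path_eq_of_lift_eq (length_add_card hS ▸ hlift)
  rfl

lemma card_liftData : Nat.card (LiftData M p) =
    ∑ q ∈ range (p + 1), (M + 2 * (p - q) + 1).choose (2 * q + 1) * A M (p - q) := by
  rw [Nat.card_sigma, ← Fin.sum_univ_eq_sum_range]
  refine Fintype.sum_congr _ _ fun q => ?_
  rw [Nat.card_prod, Nat.card_eq_fintype_card, Fintype.card_coe, card_powersetCard, card_range]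
  rfl

end Lifting

theorem sum_choose_mul_A_le (M p : ℕ) :
    ∑ q ∈ range (p + 1), (M + 2 * (p - q) + 1).choose (2 * q + 1) * A M (p - q) ≤ A (M + 1) p :=
  card_liftData (M := M) ▸ Nat.card_le_card_of_injective _ liftPath_injective

lemma A_zero_zero_pos : 0 < A 0 0 :=
  Nat.card_pos_iff.2 ⟨⟨⟨fun _ _ => false, ⟨fun a b _ => Fin.ext (by omega), fun i => i.elim0⟩,
    funext fun i => i.elim0, funext fun i => i.elim0⟩⟩, inferInstance⟩

lemma Nrec_one_le (p : ℕ) : Nrec 1 p ≤ A 1 p := by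
  rcases p with _ | p
  · have := sum_choose_mul_A_le 0 0
    simp only [zero_add, range_one, sum_singleton, mul_zero, Nat.choose_self, one_mul] at this
    exact A_zero_zero_pos.trans_le this
  · simp [Nrec]

lemma Nrec_add_two (L p : ℕ) : Nrec (L + 2) p =
    ∑ q ∈ range (p + 1), (L + 1 + 2 * (p - q) + 1).choose (2 * q + 1) * Nrec (L + 1) (p - q) := by
  rw [Nrec]
  refine sum_congr rfl fun q hq => ?_
  rw [show L + 2 + 2 * p - 2 * q = L + 1 + 2 * (p - q) + 1 by have := mem_range.1 hq; omega]

/-- `N_{L,p} ≤ A_{L,p}`. -/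
theorem stmt8 (L p : ℕ) (hL : 1 ≤ L) : Nrec L p ≤ A L p := by
  induction L, hL using Nat.le_induction generalizing p with
  | base => exact Nrec_one_le p
  | succ L hL ih =>
    obtain ⟨L, rfl⟩ := Nat.exists_eq_add_of_le' hL
    calc Nrec (L + 2) p
        = ∑ q ∈ range (p + 1), (L + 1 + 2 * (p - q) + 1).choose (2 * q + 1) * Nrec (L + 1) (p - q) :=
          Nrec_add_two L p
      _ ≤ ∑ q ∈ range (p + 1), (L + 1 + 2 * (p - q) + 1).choose (2 * q + 1) * A (L + 1) (p - q) :=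
          sum_le_sum fun q _ => Nat.mul_le_mul_left _ (ih _)
      _ ≤ A (L + 2) p := sum_choose_mul_A_le (L + 1) p
end

section
/- For integers 0 <= q <= p and L >= 1 with 2q < L+1, one has binomial(L+1+2p-2q, 2q+1) >= binomial(L+1+2p, 2q+1) * (1 - (2q+1)/(L+2))^{2q}. -/
/-! Passing from `n + 1` to `n` multiplies `C(n + 1, k)` by exactly `1 - k / (n + 1)`, which is at
least `1 - k / M` as long as `M ≤ n + 1`. Descending `2q` steps from `L + 1 + 2p` to
`L + 1 + 2p - 2q ≥ L + 1` therefore loses at most the factor `(1 - (2q + 1) / (L + 2)) ^ (2q)`. -/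

theorem Nat.cast_choose_succ_mul_one_sub_div (n k : ℕ) :
    ((n + 1).choose k : ℝ) * (1 - k / (n + 1)) = n.choose k := by
  rcases le_or_gt k (n + 1) with hk | hk
  · have h := congrArg (Nat.cast : ℕ → ℝ) (Nat.choose_mul_succ_eq n k)
    push_cast [hk] at h
    field_simp
    linarith
  · rw [Nat.choose_eq_zero_of_lt hk, Nat.choose_eq_zero_of_lt (by omega)]
    simp

theorem Nat.cast_choose_add_mul_one_sub_div_pow_le {M : ℝ} (N k m : ℕ) (hM0 : 0 < M)
    (hM : M ≤ N + 1) (hkM : k ≤ M) :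
    ((N + m).choose k : ℝ) * (1 - k / M) ^ m ≤ N.choose k := by
  have hc0 : 0 ≤ 1 - k / M := by rwa [sub_nonneg, div_le_one hM0]
  induction m with
  | zero => simp
  | succ m ih =>
    have hstep : 1 - k / M ≤ 1 - k / ((N + m : ℕ) + 1 : ℝ) := by
      gcongr
      push_cast
      linarith [m.cast_nonneg (α := ℝ)]
    calc ((N + (m + 1)).choose k : ℝ) * (1 - k / M) ^ (m + 1)
        = ((N + m + 1).choose k : ℝ) * (1 - k / M) * (1 - k / M) ^ m := by ring_nf
      _ ≤ ((N + m + 1).choose k : ℝ) * (1 - k / ((N + m : ℕ) + 1 : ℝ)) * (1 - k / M) ^ m :=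
        by gcongr
      _ = ((N + m).choose k : ℝ) * (1 - k / M) ^ m := by
        rw [Nat.cast_choose_succ_mul_one_sub_div]
      _ ≤ N.choose k := ih

theorem stmt9_general (L p q : ℕ) (hqp : q ≤ p) (hq : 2*q < L + 1) :
    ((L + 1 + 2*p).choose (2*q + 1) : ℝ) * (1 - (2*q + 1 : ℝ)/(L + 2)) ^ (2*q)
      ≤ ((L + 1 + 2*p - 2*q).choose (2*q + 1) : ℝ) := by
  have h := Nat.cast_choose_add_mul_one_sub_div_pow_le (M := L + 2) (L + 1 + 2*p - 2*q)
    (2*q + 1) (2*q) (by positivity)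
    (by push_cast [show 2*q ≤ L + 1 + 2*p by omega]; linarith [(Nat.cast_le (α := ℝ)).mpr hqp])
    (by push_cast; exact_mod_cast (by omega : 2*q + 1 ≤ L + 2))
  rwa [Nat.sub_add_cancel (by omega), Nat.cast_add_one, Nat.cast_mul, Nat.cast_two] at h

/-- For `0 ≤ q ≤ p`, `L ≥ 1`, `2q < L+1`:
`binom(L+1+2p-2q, 2q+1) ≥ binom(L+1+2p, 2q+1) (1 - (2q+1)/(L+2))^{2q}`. -/
theorem stmt9 (L p q : ℕ) (hL : 1 ≤ L) (hqp : q ≤ p) (hq : 2*q < L + 1) :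
    ((L + 1 + 2*p).choose (2*q + 1) : ℝ) * (1 - (2*q + 1 : ℝ)/(L + 2)) ^ (2*q)
      ≤ ((L + 1 + 2*p - 2*q).choose (2*q + 1) : ℝ) :=
  stmt9_general L p q hqp hq
end

section
/- Define sinh_l(X) = sum over q with 2q < l of X^{2q+1}/(2q+1)! * (1 - (2q+1)/(l+1))^{2q}, for X > 0 and integer l >= 1. Then X <= sinh_l(X) <= sinh(X) and 1 <= sinh_l'(X) <= cosh(X). -/
/-!
`sinh_l` is the Taylor series of `sinh` truncated to `2q < l` and with the `q`-th term damped by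
the weight `(1 - (2q+1)/(l+1))^(2q) ∈ [0, 1]`, which equals `1` for `q = 0`. Termwise
differentiation turns it into the correspondingly weighted Taylor series of `cosh`. Each of the
two series has nonnegative terms for `X > 0`, so its weighted partial sum lies between its first
term (`X`, resp. `1`) and its full sum (`sinh X`, resp. `cosh X`).
-/

/-- `sinh_l(X) = ∑_{2q<l} X^{2q+1}/(2q+1)! (1-(2q+1)/(l+1))^{2q}`. -/
noncomputable def sinhl (l : ℕ) (X : ℝ) : ℝ :=
  ∑ q ∈ Finset.range l, if 2*q < l then
    X ^ (2*q + 1) / (2*q + 1).factorial * (1 - (2*q + 1 : ℝ)/(l + 1)) ^ (2*q)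
  else 0

open Finset Nat

section WeightedPartialSum

variable {a w : ℕ → ℝ}

theorem le_sum_range_mul_of_weight {n : ℕ} (hn : 0 < n) (ha : ∀ q, 0 ≤ a q)
    (hw : ∀ q, 0 ≤ w q) (hw₀ : w 0 = 1) :
    a 0 ≤ ∑ q ∈ range n, w q * a q := by
  have h := single_le_sum (f := fun q => w q * a q) (fun q _ => mul_nonneg (hw q) (ha q))
    (mem_range.2 hn)
  simpa [hw₀] using h

theorem sum_range_mul_le_of_hasSum {s : ℝ} (hs : HasSum a s) (ha : ∀ q, 0 ≤ a q)
    (hw : ∀ q, w q ≤ 1) (n : ℕ) :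
    ∑ q ∈ range n, w q * a q ≤ s :=
  calc ∑ q ∈ range n, w q * a q ≤ ∑ q ∈ range n, a q :=
        sum_le_sum fun q _ => mul_le_of_le_one_left (ha q) (hw q)
    _ ≤ s := sum_le_hasSum (range n) (fun q _ => ha q) hs

end WeightedPartialSum

noncomputable def sinhlWeight (l q : ℕ) : ℝ :=
  if 2*q < l then (1 - (2*q + 1 : ℝ)/(l + 1)) ^ (2*q) else 0

theorem sinhlWeight_base_nonneg {l q : ℕ} (h : 2*q < l) : 0 ≤ 1 - (2*q + 1 : ℝ)/(l + 1) := by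
  rw [sub_nonneg, div_le_one (by positivity)]
  exact_mod_cast (by omega : 2*q + 1 ≤ l + 1)

theorem sinhlWeight_nonneg (l q : ℕ) : 0 ≤ sinhlWeight l q := by
  unfold sinhlWeight
  split_ifs with h
  · exact pow_nonneg (sinhlWeight_base_nonneg h) _
  · exact le_rfl

theorem sinhlWeight_le_one (l q : ℕ) : sinhlWeight l q ≤ 1 := by
  unfold sinhlWeight
  split_ifs with h
  · refine pow_le_one₀ (sinhlWeight_base_nonneg h) ?_
    have : (0 : ℝ) ≤ (2*q + 1)/(l + 1) := by positivity
    linarith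
  · exact zero_le_one

theorem sinhlWeight_zero {l : ℕ} (hl : 0 < l) : sinhlWeight l 0 = 1 := by
  simp [sinhlWeight, hl]

theorem sinhl_eq_sum_weight (l : ℕ) :
    sinhl l = fun X => ∑ q ∈ range l, sinhlWeight l q * (X ^ (2*q + 1) / (2*q + 1)!) := by
  funext X
  refine sum_congr rfl fun q _ => ?_
  unfold sinhlWeight
  split_ifs <;> ring

theorem hasDerivAt_pow_succ_div_factorial (n : ℕ) (x : ℝ) :
    HasDerivAt (fun x : ℝ => x ^ (n + 1) / (n + 1)!) (x ^ n / n !) x := by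
  refine ((hasDerivAt_pow (n + 1) x).div_const _).congr_deriv ?_
  rw [factorial_succ]
  push_cast
  field_simp

theorem hasDerivAt_sinhl (l : ℕ) (X : ℝ) :
    HasDerivAt (sinhl l) (∑ q ∈ range l, sinhlWeight l q * (X ^ (2*q) / (2*q)!)) X := by
  rw [sinhl_eq_sum_weight]
  exact HasDerivAt.fun_sum fun q _ =>
    (hasDerivAt_pow_succ_div_factorial (2*q) X).const_mul _

/-- For `X > 0` and `l ≥ 1`: `X ≤ sinh_l(X) ≤ sinh(X)` and
`1 ≤ sinh_l'(X) ≤ cosh(X)`. -/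
theorem stmt10 (l : ℕ) (hl : 1 ≤ l) (X : ℝ) (hX : 0 < X) :
    X ≤ sinhl l X ∧ sinhl l X ≤ Real.sinh X ∧
    1 ≤ deriv (sinhl l) X ∧ deriv (sinhl l) X ≤ Real.cosh X := by
  have hw₀ := sinhlWeight_zero hl
  have hsinh_nonneg : ∀ q, 0 ≤ X ^ (2*q + 1) / (2*q + 1)! := fun q => by positivity
  have hcosh_nonneg : ∀ q, 0 ≤ X ^ (2*q) / (2*q)! := fun q => by positivity
  rw [(hasDerivAt_sinhl l X).deriv, sinhl_eq_sum_weight]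
  refine ⟨?_, ?_, ?_, ?_⟩
  · simpa using le_sum_range_mul_of_weight hl hsinh_nonneg (sinhlWeight_nonneg l) hw₀
  · exact sum_range_mul_le_of_hasSum X.hasSum_sinh hsinh_nonneg (sinhlWeight_le_one l) l
  · simpa using le_sum_range_mul_of_weight hl hcosh_nonneg (sinhlWeight_nonneg l) hw₀
  · exact sum_range_mul_le_of_hasSum X.hasSum_cosh hcosh_nonneg (sinhlWeight_le_one l) l
end

section
/- Let g_L(X) = product over l from 1 to L of sinh_l(X), where sinh_l(X) = sum over q with 2q < l of X^{2q+1}/(2q+1)! * (1 - (2q+1)/(l+1))^{2q}. Then for every fixed X > 0, g_L(X)^{1/L} converges to sinh(X) as L tends to infinity. -/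
/-!
Each factor `sinh_l(X)` is a truncation of the series `sinh X = ∑ X^{2q+1}/(2q+1)!` whose terms
are damped by factors in `[0, 1]` tending to `1`, so `sinh_l(X) → sinh X` by dominated
convergence (Tannery's theorem). The `L`-th root of `g_L(X)` is the geometric mean of the first
`L` factors, and geometric means of a positive sequence converge to its positive limit
(Cesàro's theorem applied to logarithms).
-/

open Filter

open Topology Finset

noncomputable def sinhlTerm (l q : ℕ) (X : ℝ) : ℝ :=
  if 2*q < l then
    X ^ (2*q + 1) / (2*q + 1).factorial * (1 - (2*q + 1 : ℝ)/(l + 1)) ^ (2*q)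
  else 0

lemma sinhl_eq_sum (l : ℕ) (X : ℝ) : sinhl l X = ∑ q ∈ range l, sinhlTerm l q X := rfl

lemma sinhl_eq_tsum (l : ℕ) (X : ℝ) : sinhl l X = ∑' q, sinhlTerm l q X := by
  rw [sinhl_eq_sum, tsum_eq_sum]
  intro q hq
  rw [sinhlTerm, if_neg (by simp only [mem_range, not_lt] at hq; omega)]

lemma sinhlTerm_nonneg {X : ℝ} (hX : 0 ≤ X) (l q : ℕ) : 0 ≤ sinhlTerm l q X := by
  unfold sinhlTerm
  split_ifs
  · exact mul_nonneg (by positivity) (Even.pow_nonneg (even_two_mul q) _)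
  · rfl

lemma norm_sinhlTerm_le (l q : ℕ) (X : ℝ) :
    ‖sinhlTerm l q X‖ ≤ |X| ^ (2*q + 1) / (2*q + 1).factorial := by
  unfold sinhlTerm
  split_ifs with h
  · have hq : (2*q + 1 : ℝ) ≤ l + 1 := by exact_mod_cast (by omega : 2*q + 1 ≤ l + 1)
    have hdamp : |1 - (2*q + 1 : ℝ)/(l + 1)| ≤ 1 := by
      rw [abs_le]
      constructor
      · linarith [div_le_one_of_le₀ hq (by positivity : (0:ℝ) ≤ l + 1)]
      · linarith [(by positivity : (0:ℝ) ≤ (2*q + 1 : ℝ)/(l + 1))]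
    rw [Real.norm_eq_abs, abs_mul, abs_div, abs_pow, abs_pow, Nat.abs_cast]
    exact mul_le_of_le_one_right (by positivity) (pow_le_one₀ (abs_nonneg _) hdamp)
  · simp only [norm_zero]
    positivity

lemma tendsto_sinhlTerm (q : ℕ) (X : ℝ) :
    Tendsto (fun l => sinhlTerm l q X) atTop (𝓝 (X ^ (2*q + 1) / (2*q + 1).factorial)) := by
  have hratio : Tendsto (fun l : ℕ => (2*q + 1 : ℝ)/(l + 1)) atTop (𝓝 0) :=
    tendsto_const_nhds.div_atTop
      (tendsto_atTop_add_const_right _ _ tendsto_natCast_atTop_atTop)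
  have hlim := (((tendsto_const_nhds (x := (1:ℝ))).sub hratio).pow (2*q)).const_mul
    (X ^ (2*q + 1) / ((2*q + 1).factorial : ℝ))
  rw [sub_zero, one_pow, mul_one] at hlim
  refine hlim.congr' ?_
  filter_upwards [eventually_gt_atTop (2*q)] with l hl
  rw [sinhlTerm, if_pos hl]

lemma tendsto_sinhl (X : ℝ) : Tendsto (fun l => sinhl l X) atTop (𝓝 (Real.sinh X)) := by
  have hlim := tendsto_tsum_of_dominated_convergence (Real.hasSum_sinh |X|).summable
    (tendsto_sinhlTerm · X) (Eventually.of_forall fun l q => norm_sinhlTerm_le l q X)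
  rw [(Real.hasSum_sinh X).tsum_eq] at hlim
  exact hlim.congr fun l => (sinhl_eq_tsum l X).symm

lemma sinhl_pos {X : ℝ} (hX : 0 < X) {l : ℕ} (hl : 1 ≤ l) : 0 < sinhl l X := by
  rw [sinhl_eq_sum]
  refine sum_pos' (fun q _ => sinhlTerm_nonneg hX.le l q) ⟨0, mem_range.2 hl, ?_⟩
  rw [sinhlTerm, if_pos (by omega)]
  simp [hX]

lemma tendsto_prod_range_rpow_one_div {a : ℕ → ℝ} {c : ℝ} (ha : ∀ n, 0 < a n) (hc : 0 < c)
    (h : Tendsto a atTop (𝓝 c)) :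
    Tendsto (fun n : ℕ => (∏ i ∈ range n, a i) ^ ((1:ℝ)/n)) atTop (𝓝 c) := by
  have hlog : Tendsto (fun n : ℕ => (n:ℝ)⁻¹ * Real.log (∏ i ∈ range n, a i)) atTop
      (𝓝 (Real.log c)) := by
    simpa only [Real.log_prod fun i _ => (ha i).ne'] using (h.log hc.ne').cesaro
  have hexp := (Real.continuous_exp.tendsto _).comp hlog
  rw [Function.comp_def, Real.exp_log hc] at hexp
  refine hexp.congr fun n => ?_
  rw [Real.rpow_def_of_pos (prod_pos fun i _ => ha i), one_div, mul_comm]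

/-- With `g_L(X) = ∏_{l=1}^L sinh_l(X)`, for fixed `X > 0`,
`g_L(X)^{1/L} → sinh(X)` as `L → ∞`. -/
theorem stmt11 (X : ℝ) (hX : 0 < X) :
    Tendsto (fun L : ℕ => (∏ l ∈ Finset.Icc 1 L, sinhl l X) ^ ((1:ℝ)/L))
      atTop (nhds (Real.sinh X)) := by
  have hshift : ∀ L, ∏ l ∈ Icc 1 L, sinhl l X = ∏ i ∈ range L, sinhl (i + 1) X := fun L => by
    rw [← Finset.Ico_add_one_right_eq_Icc, prod_Ico_eq_prod_range, Nat.add_sub_cancel]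
    simp only [add_comm]
  simp only [hshift]
  exact tendsto_prod_range_rpow_one_div (fun i => sinhl_pos hX i.succ_pos)
    (Real.sinh_pos_iff.2 hX) ((tendsto_sinhl X).comp (tendsto_add_atTop_nat 1))
end

section
/- Define polynomials phi_L by phi_1(X) = X and phi_{L+1}(X) = ((1+X)/2) phi_L(X + X^2) - ((1-X)/2) phi_L(X - X^2). Then the degree d_L of phi_L satisfies d_L = (2^{L+1} - 1)/3 if L is odd and d_L = (2^{L+1} - 2)/3 if L is even. -/
/-!
The recursion is the linear operator `Ψ p = ((1+X)/2) p(X+X²) - ((1-X)/2) p(X-X²)`, and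
`Ψ (X^k) = X^k · O_{k+1}` where `O_m` is the odd part of `(1+X)^m`. Its degree is `m` for odd `m`
and `m - 1` for even `m`, so `Ψ (X^d)` has degree `2d+1` for even `d` and `2d` for odd `d`,
while the lower monomials of `p` contribute degree at most `2d-1`. Hence `d_{L+1}` is `2 d_L + 1`
or `2 d_L` according to the parity of `d_L`, and the closed form follows from `2^{L+1} ≡ 4` or
`2 (mod 6)` according to the parity of `L`.
-/

open Polynomial

/-- `φ_1(X) = X`,
`φ_{L+1}(X) = ((1+X)/2) φ_L(X+X²) - ((1-X)/2) φ_L(X-X²)`. -/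
noncomputable def phi : ℕ → Polynomial ℚ
  | 0 => 0
  | 1 => X
  | (L+2) => C (1/2) * (1 + X) * (phi (L+1)).comp (X + X^2)
           - C (1/2) * (1 - X) * (phi (L+1)).comp (X - X^2)

def degStep (d : ℕ) : ℕ := if Even d then 2 * d + 1 else 2 * d

theorem one_le_degStep (d : ℕ) : 1 ≤ degStep d := by
  simp only [degStep, Nat.even_iff]
  split_ifs <;> omega

section OddPart

variable {K : Type*} [Field K] [CharZero K]

noncomputable def oddPart (p : K[X]) : K[X] := C (1/2) * (p - p.comp (-X))

theorem coeff_oddPart (p : K[X]) (j : ℕ) :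
    (oddPart p).coeff j = if Odd j then p.coeff j else 0 := by
  have hneg : p.comp (-X) = p.comp (C (-1) * X) := by simp
  rw [oddPart, coeff_C_mul, coeff_sub, hneg, comp_C_mul_X_coeff]
  rcases Nat.even_or_odd j with hj | hj
  · rw [hj.neg_one_pow, if_neg (Nat.not_odd_iff_even.mpr hj)]; ring
  · rw [hj.neg_one_pow, if_pos hj]; ring

theorem natDegree_X_pow_mul_oddPart_one_add_X_pow (d : ℕ) :
    (X ^ d * oddPart ((1 + X : K[X]) ^ (d + 1))).natDegree = degStep d := by
  have hcoeff : ∀ n, (X ^ d * oddPart ((1 + X : K[X]) ^ (d + 1))).coeff n =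
      if d ≤ n ∧ Odd (n - d) then ((d + 1).choose (n - d) : K) else 0 := by
    intro n
    rw [coeff_X_pow_mul', coeff_oddPart, coeff_one_add_X_pow]
    split_ifs <;> tauto
  refine natDegree_eq_of_le_of_coeff_ne_zero ?_ ?_
  · refine natDegree_le_iff_coeff_eq_zero.mpr fun n hn => ?_
    rw [hcoeff, ite_eq_right_iff]
    rintro ⟨-, hodd⟩
    suffices d + 1 < n - d by simp [Nat.choose_eq_zero_of_lt this]
    simp only [degStep, Nat.even_iff] at hn
    rw [Nat.odd_iff] at hodd
    split_ifs at hn <;> omega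
  · have hle : degStep d - d ≤ d + 1 := by unfold degStep; split_ifs <;> omega
    rw [hcoeff, if_pos]
    · exact_mod_cast (Nat.choose_pos hle).ne'
    · simp only [degStep, Nat.even_iff, Nat.odd_iff]
      split_ifs <;> omega

end OddPart

noncomputable def phiStep (p : ℚ[X]) : ℚ[X] :=
  C (1/2) * (1 + X) * p.comp (X + X^2) - C (1/2) * (1 - X) * p.comp (X - X^2)

theorem phi_add_two (L : ℕ) : phi (L + 2) = phiStep (phi (L + 1)) := rfl

theorem phiStep_add (p q : ℚ[X]) : phiStep (p + q) = phiStep p + phiStep q := by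
  simp only [phiStep, add_comp]; ring

theorem phiStep_zero : phiStep 0 = 0 := by simp [phiStep]

theorem phiStep_monomial (k : ℕ) (c : ℚ) :
    phiStep (monomial k c) = C c * (X ^ k * oddPart ((1 + X) ^ (k + 1))) := by
  have hplus : (X + X ^ 2 : ℚ[X]) = X * (1 + X) := by ring
  have hminus : (X - X ^ 2 : ℚ[X]) = X * (1 - X) := by ring
  rw [phiStep, oddPart, monomial_comp, monomial_comp, hplus, hminus, mul_pow, mul_pow, pow_comp,
    add_comp, one_comp, X_comp]
  ring

theorem natDegree_phiStep_le (p : ℚ[X]) : (phiStep p).natDegree ≤ 1 + p.natDegree * 2 := by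
  have hcomp : ∀ q : ℚ[X], q.natDegree ≤ 2 → (p.comp q).natDegree ≤ p.natDegree * 2 :=
    fun q hq => natDegree_comp_le.trans (Nat.mul_le_mul_left _ hq)
  calc (phiStep p).natDegree ≤ max (1 + p.natDegree * 2) (1 + p.natDegree * 2) :=
        natDegree_sub_le_of_le
          (natDegree_mul_le_of_le (by compute_degree) (hcomp _ (by compute_degree)))
          (natDegree_mul_le_of_le (by compute_degree) (hcomp _ (by compute_degree)))
    _ = 1 + p.natDegree * 2 := max_self _

theorem natDegree_phiStep {p : ℚ[X]} (hp : p ≠ 0) :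
    (phiStep p).natDegree = degStep p.natDegree := by
  set d := p.natDegree
  have hsplit : phiStep p =
      C p.leadingCoeff * (X ^ d * oddPart ((1 + X) ^ (d + 1))) + phiStep p.eraseLead := by
    conv_lhs => rw [← eraseLead_add_monomial_natDegree_leadingCoeff p]
    rw [phiStep_add, phiStep_monomial, add_comm]
  have hlead : (C p.leadingCoeff * (X ^ d * oddPart ((1 + X : ℚ[X]) ^ (d + 1)))).natDegree
      = degStep d := by
    rw [natDegree_C_mul (leadingCoeff_ne_zero.mpr hp), natDegree_X_pow_mul_oddPart_one_add_X_pow]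
  have hrest : (phiStep p.eraseLead).natDegree < degStep d := by
    rcases eraseLead_natDegree_lt_or_eraseLead_eq_zero p with hlt | hzero
    · have : 2 * d ≤ degStep d := by unfold degStep; split_ifs <;> omega
      have := natDegree_phiStep_le p.eraseLead
      omega
    · rw [hzero, phiStep_zero, natDegree_zero]
      exact one_le_degStep d
  rw [hsplit, natDegree_add_eq_left_of_natDegree_lt (hlead ▸ hrest), hlead]

theorem phi_succ_ne_zero (L : ℕ) : phi (L + 1) ≠ 0 := by
  induction L with
  | zero => exact X_ne_zero
  | succ L ih =>
    refine ne_zero_of_natDegree_gt (n := 0) ?_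
    rw [phi_add_two, natDegree_phiStep ih]
    exact one_le_degStep _

theorem two_pow_succ_mod_six (L : ℕ) : 2 ^ (L + 1) % 6 = if Odd L then 4 else 2 := by
  induction L with
  | zero => rfl
  | succ L ih =>
    rw [pow_succ]
    simp only [Nat.odd_add_one]
    split_ifs at ih ⊢ <;> omega

theorem degStep_closed_form (L : ℕ) :
    degStep (if Odd L then (2 ^ (L + 1) - 1) / 3 else (2 ^ (L + 1) - 2) / 3)
      = if Odd (L + 1) then (2 ^ (L + 1 + 1) - 1) / 3 else (2 ^ (L + 1 + 1) - 2) / 3 := by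
  have hmod := two_pow_succ_mod_six L
  rw [pow_succ 2 (L + 1)]
  unfold degStep
  simp only [Nat.odd_add_one, Nat.even_iff]
  split_ifs at hmod ⊢ <;> omega

theorem stmt16_general (L : ℕ) :
    (phi L).natDegree = if Odd L then (2^(L+1) - 1)/3 else (2^(L+1) - 2)/3 := by
  induction L using Nat.twoStepInduction with
  | zero => simp [phi]
  | one => simp [phi]
  | more L _ ih =>
    rw [phi_add_two, natDegree_phiStep (phi_succ_ne_zero L), ih, degStep_closed_form]

/-- The degree `d_L` of `φ_L` equals `(2^{L+1}-1)/3` for odd `L` and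
`(2^{L+1}-2)/3` for even `L`. -/
theorem stmt16 (L : ℕ) (hL : 1 ≤ L) :
    (phi L).natDegree = if Odd L then (2^(L+1) - 1)/3 else (2^(L+1) - 2)/3 :=
  stmt16_general L
end

section
/- Let a_L be the number of self-avoiding paths from (0,...,0) to (1,...,1) on the L-hypercube. Then (ln ln a_L)/L converges to ln 2 as L tends to infinity; more precisely there exist positive constants c, c' such that for L large enough, c <= (ln a_L)/2^L <= c' ln L. -/
/-!
A self-avoiding path has fewer than `2^L` steps and is determined by its start and the
coordinates it flips, so `a_L ≤ 2^L · L^(2^L)`. Conversely, write `N_L(u, v)` for the number of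
self-avoiding paths from `u` to `v`. If `u` and `v` differ in coordinate `i`, walking from `u` to
any `x` inside the face `{y | y i = u i}` and then from `x` to `v` inside the opposite face gives
`N_{L+1}(u, v) ≥ ∑ₓ N_L(u₀, x) N_L(x, v₀)`, with `u₀, v₀` the endpoints with coordinate `i`
removed. Hence `N_{L+2}(u, v) ≥ 2^(2^L)` for `u ≠ v`.
So `c 2^L ≤ log a_L ≤ c' 2^L log L`, and one more logarithm gives the limit.
-/

open Filter

/-- `a L`: total number of self-avoiding paths (of any length) from all-zeros
to all-ones on the `L`-hypercube. -/
noncomputable def totalSAPaths (L : ℕ) : ℕ :=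
  Nat.card (Σ n : ℕ, {f : Fin (n+1) → Fin L → Bool //
    IsSAPath n f ∧ f 0 = (fun _ => false) ∧ f (Fin.last n) = (fun _ => true)})

section Paths

variable {L : ℕ}

theorem HypercubeAdj.eq_update_not {u v : Fin L → Bool} {i : Fin L} (h : HypercubeAdj u v)
    (hi : u i ≠ v i) : v = Function.update u i (!u i) := by
  funext j
  rcases eq_or_ne j i with rfl | hj
  · revert hi; cases u j <;> cases v j <;> simp
  · rw [Function.update_of_ne hj]
    by_contra hne
    exact hj (h.unique (Ne.symm hne) hi)

def SAPath (L : ℕ) (u v : Fin L → Bool) : Type :=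
  Σ n : ℕ, {f : Fin (n+1) → Fin L → Bool // IsSAPath n f ∧ f 0 = u ∧ f (Fin.last n) = v}

noncomputable def saPathCount (L : ℕ) (u v : Fin L → Bool) : ℕ := Nat.card (SAPath L u v)

theorem totalSAPaths_eq_saPathCount (L : ℕ) :
    totalSAPaths L = saPathCount L (fun _ => false) (fun _ => true) := rfl

theorem IsSAPath.lt_two_pow {n : ℕ} {f : Fin (n+1) → Fin L → Bool} (h : IsSAPath n f) :
    n < 2 ^ L := by
  simpa using Fintype.card_le_of_injective f h.1

theorem eq_of_flips {n : ℕ} {f g : Fin (n+1) → Fin L → Bool} (d : Fin n → Fin L)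
    (hf : ∀ k : Fin n, HypercubeAdj (f k.castSucc) (f k.succ))
    (hg : ∀ k : Fin n, HypercubeAdj (g k.castSucc) (g k.succ))
    (hfd : ∀ k : Fin n, f k.castSucc (d k) ≠ f k.succ (d k))
    (hgd : ∀ k : Fin n, g k.castSucc (d k) ≠ g k.succ (d k)) (h0 : f 0 = g 0) : f = g := by
  funext k
  induction k using Fin.induction with
  | zero => exact h0
  | succ k ih => rw [(hf k).eq_update_not (hfd k), (hg k).eq_update_not (hgd k), ih]

namespace SAPath

variable {u v : Fin L → Bool}

noncomputable def flips (P : SAPath L u v) : Σ n : Fin (2 ^ L), (Fin n → Fin L) :=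
  ⟨⟨P.1, P.2.2.1.lt_two_pow⟩, fun k => (P.2.2.1.2 k).exists.choose⟩

theorem flips_injective : Function.Injective (flips (L := L) (u := u) (v := v)) := by
  rintro ⟨n, f, hf, hf0, _⟩ ⟨n', g, hg, hg0, _⟩ h
  obtain ⟨hn, hd⟩ := Sigma.mk.inj_iff.1 h
  obtain rfl : n = n' := congrArg Fin.val hn
  have hd : ∀ k, (hf.2 k).exists.choose = (hg.2 k).exists.choose := congrFun (eq_of_heq hd)
  obtain rfl : f = g := eq_of_flips _ hf.2 hg.2 (fun k => (hf.2 k).exists.choose_spec)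
    (fun k => hd k ▸ (hg.2 k).exists.choose_spec) (hf0.trans hg0.symm)
  rfl

instance : Finite (SAPath L u v) := Finite.of_injective _ flips_injective

end SAPath

theorem saPathCount_le (hL : 0 < L) (u v : Fin L → Bool) :
    saPathCount L u v ≤ 2 ^ L * L ^ 2 ^ L :=
  calc saPathCount L u v ≤ Nat.card (Σ n : Fin (2 ^ L), (Fin n → Fin L)) :=
        Nat.card_le_card_of_injective _ SAPath.flips_injective
    _ = ∑ n : Fin (2 ^ L), L ^ (n : ℕ) := by simp
    _ ≤ ∑ _n : Fin (2 ^ L), L ^ 2 ^ L :=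
        Finset.sum_le_sum fun n _ => Nat.pow_le_pow_right hL n.isLt.le
    _ = 2 ^ L * L ^ 2 ^ L := by simp

theorem isSAPath_iff_ofFn {n : ℕ} {f : Fin (n+1) → Fin L → Bool} :
    IsSAPath n f ↔ (List.ofFn f).Nodup ∧ (List.ofFn f).IsChain HypercubeAdj := by
  rw [IsSAPath, List.nodup_ofFn, List.isChain_ofFn]
  exact and_congr_right fun _ => ⟨fun h k hk => h ⟨k, by omega⟩, fun h k => h k (by omega)⟩

theorem HypercubeAdj.insertNth (i : Fin (L+1)) (b : Bool) {y y' : Fin L → Bool}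
    (h : HypercubeAdj y y') : HypercubeAdj (i.insertNth b y) (i.insertNth b y') := by
  obtain ⟨j, hj, huniq⟩ := h
  refine ⟨i.succAbove j, by simpa using hj, fun j' hj' => ?_⟩
  have hne : j' ≠ i := by rintro rfl; simp at hj'
  obtain ⟨j'', rfl⟩ := Fin.exists_succAbove_eq hne
  exact congrArg _ (huniq j'' (by simpa using hj'))

theorem hypercubeAdj_insertNth_not (i : Fin (L+1)) (b : Bool) (y : Fin L → Bool) :
    HypercubeAdj (i.insertNth b y) (i.insertNth (!b) y) := by
  refine ⟨i, by simp, fun j hj => ?_⟩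
  by_contra hne
  obtain ⟨j', rfl⟩ := Fin.exists_succAbove_eq hne
  simp at hj

/-- Walk along `p` in the face `{x | x i = b}`, cross to the opposite face, then walk along `q`. -/
def glueFun {n m : ℕ} (i : Fin (L+1)) (b : Bool) (p : Fin (n+1) → Fin L → Bool)
    (q : Fin (m+1) → Fin L → Bool) : Fin (n + 1 + m + 1) → Fin (L+1) → Bool :=
  Fin.append (m := n + 1) (n := m + 1) (fun k => i.insertNth b (p k))
    (fun k => i.insertNth (!b) (q k))

section Glue

variable {n m : ℕ} (i : Fin (L+1)) (b : Bool) {p : Fin (n+1) → Fin L → Bool}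
  {q : Fin (m+1) → Fin L → Bool}

theorem ofFn_glueFun : List.ofFn (glueFun i b p q) =
    (List.ofFn p).map (i.insertNth b) ++ (List.ofFn q).map (i.insertNth (!b)) := by
  rw [List.map_ofFn, List.map_ofFn]
  exact List.ofFn_fin_append (m := n + 1) (n := m + 1) _ _

theorem glueFun_zero : glueFun i b p q 0 = i.insertNth b (p 0) :=
  Fin.append_left _ _ 0

theorem glueFun_last :
    glueFun i b p q (Fin.last (n + 1 + m)) = i.insertNth (!b) (q (Fin.last m)) :=
  Fin.append_right _ _ (Fin.last m)

theorem IsSAPath.glueFun (hp : IsSAPath n p) (hq : IsSAPath m q) (hpq : p (Fin.last n) = q 0) :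
    IsSAPath (n + 1 + m) (glueFun i b p q) := by
  rw [isSAPath_iff_ofFn] at hp hq ⊢
  rw [ofFn_glueFun]
  refine ⟨List.nodup_append.2 ⟨hp.1.map (Fin.insertNth_right_injective _),
    hq.1.map (Fin.insertNth_right_injective _), ?_⟩, List.IsChain.append ?_ ?_ ?_⟩
  · simp only [List.mem_map]
    rintro _ ⟨y, -, rfl⟩ _ ⟨y', -, rfl⟩ h
    simpa using congrFun h i
  · exact (List.isChain_map _).2 (hp.2.imp fun _ _ h => h.insertNth i b)
  · exact (List.isChain_map _).2 (hq.2.imp fun _ _ h => h.insertNth i (!b))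
  · rw [List.ofFn_succ' (f := p), List.ofFn_succ (f := q)]
    simpa [hpq] using hypercubeAdj_insertNth_not i b (q 0)

end Glue

namespace SAPath

def nil (u : Fin L → Bool) : SAPath L u u :=
  ⟨0, fun _ => u, ⟨fun a b _ => Fin.ext (by omega), fun k => k.elim0⟩, rfl, rfl⟩

def glue (i : Fin (L+1)) (b : Bool) {u x v : Fin L → Bool} (P : SAPath L u x)
    (Q : SAPath L x v) : SAPath (L+1) (i.insertNth b u) (i.insertNth (!b) v) :=
  ⟨P.1 + 1 + Q.1, glueFun i b P.2.1 Q.2.1,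
    P.2.2.1.glueFun i b Q.2.2.1 (P.2.2.2.2.trans Q.2.2.2.1.symm),
    by rw [glueFun_zero, P.2.2.2.1], by rw [glueFun_last, Q.2.2.2.2]⟩

/-- The two halves of a glued path are recovered as the vertices with `i`-th coordinate `b`,
resp. `!b`. -/
theorem glue_injective (i : Fin (L+1)) (b : Bool) (u v : Fin L → Bool) :
    Function.Injective fun z : Σ x, SAPath L u x × SAPath L x v => z.2.1.glue i b z.2.2 := by
  rintro ⟨x, ⟨n, p, _, _, hpx⟩, ⟨m, q, _⟩⟩ ⟨x', ⟨n', p', _, _, hpx'⟩, ⟨m', q', _⟩⟩ h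
  have hlist := congrArg (fun R : SAPath (L+1) _ _ => List.ofFn R.2.1) h
  simp only [glue, ofFn_glueFun] at hlist
  have hpp : List.ofFn p = List.ofFn p' := by
    have := congrArg (List.filter fun y => y i == b) hlist
    simp only [List.filter_append, List.filter_map, Function.comp_def, Fin.insertNth_apply_same,
      beq_self_eq_true, Bool.not_beq_self, List.filter_true, List.filter_false, List.map_nil,
      List.append_nil] at this
    exact List.map_injective_iff.2 (Fin.insertNth_right_injective _) this
  rw [hpp] at hlist
  have hqq : List.ofFn q = List.ofFn q' :=
    List.map_injective_iff.2 (Fin.insertNth_right_injective _) (List.append_cancel_left hlist)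
  obtain ⟨hn, hpp⟩ := Sigma.mk.inj_iff.1 (List.ofFn_inj'.1 hpp)
  obtain ⟨hm, hqq⟩ := Sigma.mk.inj_iff.1 (List.ofFn_inj'.1 hqq)
  obtain rfl : n = n' := Nat.succ_injective hn
  obtain rfl : m = m' := Nat.succ_injective hm
  obtain rfl := eq_of_heq hpp
  obtain rfl := eq_of_heq hqq
  obtain rfl : x = x' := hpx.symm.trans hpx'
  rfl

end SAPath

theorem sum_mul_saPathCount_le (i : Fin (L+1)) (b : Bool) (u v : Fin L → Bool) :
    ∑ x, saPathCount L u x * saPathCount L x v ≤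
      saPathCount (L+1) (i.insertNth b u) (i.insertNth (!b) v) := by
  simpa [saPathCount, Nat.card_sigma] using
    Nat.card_le_card_of_injective _ (SAPath.glue_injective i b u v)

theorem exists_sum_mul_saPathCount_le {u v : Fin (L+1) → Bool} (huv : u ≠ v) :
    ∃ u₀ v₀ : Fin L → Bool,
      ∑ x, saPathCount L u₀ x * saPathCount L x v₀ ≤ saPathCount (L+1) u v := by
  obtain ⟨i, hi⟩ := Function.ne_iff.1 huv
  have hvi : (!u i) = v i := by revert hi; cases u i <;> cases v i <;> simp
  refine ⟨i.removeNth u, i.removeNth v, ?_⟩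
  have := sum_mul_saPathCount_le i (u i) (i.removeNth u) (i.removeNth v)
  rwa [Fin.insertNth_self_removeNth, hvi, Fin.insertNth_self_removeNth] at this

theorem saPathCount_self_pos (u : Fin L → Bool) : 0 < saPathCount L u u :=
  Nat.card_pos_iff.2 ⟨⟨.nil u⟩, inferInstance⟩

theorem saPathCount_pos : ∀ {L : ℕ} (u v : Fin L → Bool), 0 < saPathCount L u v
  | 0, u, v => Subsingleton.elim u v ▸ saPathCount_self_pos u
  | L+1, u, v => by
    rcases eq_or_ne u v with rfl | huv
    · exact saPathCount_self_pos u
    obtain ⟨u₀, v₀, h⟩ := exists_sum_mul_saPathCount_le huv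
    exact lt_of_lt_of_le (Nat.mul_pos (saPathCount_pos u₀ u₀) (saPathCount_pos u₀ v₀))
      ((Finset.single_le_sum (fun _ _ => Nat.zero_le _) (Finset.mem_univ u₀)).trans h)

theorem add_self_le_saPathCount {u v : Fin (L+1) → Bool} (huv : u ≠ v) {t : ℕ}
    (ht : ∀ u₀ v₀ : Fin L → Bool, ∃ x₁ x₂, x₁ ≠ x₂ ∧
      t ≤ saPathCount L u₀ x₁ * saPathCount L x₁ v₀ ∧
      t ≤ saPathCount L u₀ x₂ * saPathCount L x₂ v₀) :
    t + t ≤ saPathCount (L+1) u v := by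
  obtain ⟨u₀, v₀, h⟩ := exists_sum_mul_saPathCount_le huv
  obtain ⟨x₁, x₂, hx, h₁, h₂⟩ := ht u₀ v₀
  calc t + t ≤ _ := add_le_add h₁ h₂
    _ ≤ ∑ x, saPathCount L u₀ x * saPathCount L x v₀ :=
      Finset.add_le_sum (f := fun x => saPathCount L u₀ x * saPathCount L x v₀)
        (fun _ _ => Nat.zero_le _) (Finset.mem_univ _) (Finset.mem_univ _) hx
    _ ≤ _ := h

/-- `N(L+3) ≥ 2 N(L+2)²`, by gluing through two vertices other than the endpoints. -/
theorem two_pow_two_pow_le_saPathCount :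
    ∀ {L : ℕ} {u v : Fin (L+2) → Bool}, u ≠ v → 2 ^ 2 ^ L ≤ saPathCount (L+2) u v
  | 0, u, v, huv => add_self_le_saPathCount huv fun u₀ v₀ =>
      ⟨fun _ => false, fun _ => true, fun h => by simpa using congrFun h 0,
        Nat.mul_pos (saPathCount_pos _ _) (saPathCount_pos _ _),
        Nat.mul_pos (saPathCount_pos _ _) (saPathCount_pos _ _)⟩
  | L+1, u, v, huv => by
    have hsq : 2 ^ 2 ^ (L+1) ≤ 2 ^ 2 ^ L * 2 ^ 2 ^ L + 2 ^ 2 ^ L * 2 ^ 2 ^ L := by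
      rw [pow_succ, pow_mul, sq]
      exact Nat.le_add_right _ _
    refine hsq.trans (add_self_le_saPathCount huv fun u₀ v₀ => ?_)
    have hcard : 1 < ({u₀, v₀}ᶜ : Finset (Fin (L+2) → Bool)).card := by
      have h4 : 2 ^ 2 ≤ 2 ^ (L+2) := Nat.pow_le_pow_right (by norm_num) (by omega)
      have h2 := Finset.card_le_two (a := u₀) (b := v₀)
      rw [Finset.card_compl, Fintype.card_fun, Fintype.card_bool, Fintype.card_fin]
      omega
    obtain ⟨x₁, hx₁, x₂, hx₂, hx⟩ := Finset.one_lt_card.1 hcard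
    simp only [Finset.mem_compl, Finset.mem_insert, Finset.mem_singleton, not_or] at hx₁ hx₂
    exact ⟨x₁, x₂, hx,
      Nat.mul_le_mul (two_pow_two_pow_le_saPathCount (Ne.symm hx₁.1))
        (two_pow_two_pow_le_saPathCount hx₁.2),
      Nat.mul_le_mul (two_pow_two_pow_le_saPathCount (Ne.symm hx₂.1))
        (two_pow_two_pow_le_saPathCount hx₂.2)⟩

end Paths

section Asymptotics

open Real

theorem log_totalSAPaths_bounds {L : ℕ} (hL : 2 ≤ L) :
    log 2 / 4 * 2 ^ L ≤ log (totalSAPaths L) ∧ log (totalSAPaths L) ≤ 2 * 2 ^ L * log L := by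
  obtain ⟨M, rfl⟩ := Nat.exists_eq_add_of_le' hL
  rw [totalSAPaths_eq_saPathCount]
  have hlow : (2 : ℝ) ^ 2 ^ M ≤ saPathCount (M+2) (fun _ => false) (fun _ => true) := by
    exact_mod_cast two_pow_two_pow_le_saPathCount fun h => by simpa using congrFun h 0
  have hup : (saPathCount (M+2) (fun _ => false) (fun _ => true) : ℝ) ≤
      2 ^ (M+2) * ((M+2 : ℕ) : ℝ) ^ 2 ^ (M+2) := by
    exact_mod_cast saPathCount_le (by omega) _ _
  have hpos : (0 : ℝ) < 2 ^ 2 ^ M := by positivity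
  have hM : (M + 2 : ℝ) ≤ 2 ^ (M+2) := by exact_mod_cast (Nat.lt_two_pow_self (n := M+2)).le
  have hlog2 : log 2 ≤ log (M + 2 : ℝ) :=
    log_le_log (by norm_num) (by linarith [M.cast_nonneg (α := ℝ)])
  push_cast at hup ⊢
  constructor
  · calc log 2 / 4 * 2 ^ (M+2) = log ((2 : ℝ) ^ 2 ^ M) := by
          rw [log_pow, pow_add]; push_cast; ring
      _ ≤ _ := log_le_log hpos hlow
  · calc _ ≤ log (2 ^ (M+2) * (M + 2 : ℝ) ^ 2 ^ (M+2)) := log_le_log (hpos.trans_le hlow) hup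
      _ = (M + 2) * log 2 + 2 ^ (M+2) * log (M + 2 : ℝ) := by
          rw [log_mul (by positivity) (by positivity), log_pow, log_pow]; push_cast; ring
      _ ≤ 2 * 2 ^ (M+2) * log (M + 2 : ℝ) := by
          nlinarith [log_nonneg (one_le_two (α := ℝ))]

theorem tendsto_log_div_of_bounds {x : ℕ → ℝ} {c c' : ℝ} (hc : 0 < c) (hc' : 0 < c')
    (hx : ∀ᶠ L : ℕ in atTop, c * 2 ^ L ≤ x L ∧ x L ≤ c' * 2 ^ L * log L) :
    Tendsto (fun L : ℕ => log (x L) / L) atTop (nhds (log 2)) := by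
  have hlo : Tendsto (fun L : ℕ => log 2 + log c / L) atTop (nhds (log 2)) := by
    simpa using tendsto_const_nhds.add (tendsto_const_div_atTop_nhds_zero_nat (log c))
  have hhi : Tendsto (fun L : ℕ => log 2 + (log c' / L + log L / L)) atTop (nhds (log 2)) := by
    simpa using tendsto_const_nhds.add ((tendsto_const_div_atTop_nhds_zero_nat (log c')).add
      (isLittleO_log_id_atTop.tendsto_div_nhds_zero.comp tendsto_natCast_atTop_atTop))
  refine tendsto_of_tendsto_of_tendsto_of_le_of_le' hlo hhi ?_ ?_
  all_goals
    filter_upwards [hx, eventually_ge_atTop 1] with L ⟨hlow, hup⟩ hL1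
    have hL : (1 : ℝ) ≤ L := by exact_mod_cast hL1
    have hpos : 0 < c * 2 ^ L := by positivity
  · calc log 2 + log c / L = log (c * 2 ^ L) / L := by
          rw [log_mul hc.ne' (by positivity), log_pow]; field_simp; ring
      _ ≤ log (x L) / L := by gcongr
  · calc log (x L) / L ≤ log (c' * 2 ^ L * L) / L := by
          gcongr
          · exact hpos.trans_le hlow
          · exact hup.trans (by gcongr; exact log_le_self (by linarith))
      _ = log 2 + (log c' / L + log L / L) := by
          rw [log_mul (by positivity) (by positivity), log_mul hc'.ne' (by positivity), log_pow]
          field_simp; ring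

end Asymptotics

/-- `(ln ln a_L)/L → ln 2`; more precisely there are constants `c, c' > 0` with
`c ≤ (ln a_L)/2^L ≤ c' ln L` for `L` large enough. -/
theorem stmt17 :
    Tendsto (fun L : ℕ => Real.log (Real.log (totalSAPaths L)) / L)
      atTop (nhds (Real.log 2)) ∧
    ∃ c c' : ℝ, 0 < c ∧ 0 < c' ∧ ∀ᶠ L : ℕ in atTop,
      c ≤ Real.log (totalSAPaths L) / 2^L ∧
      Real.log (totalSAPaths L) / 2^L ≤ c' * Real.log L := by
  have hbounds : ∀ᶠ L : ℕ in atTop, Real.log 2 / 4 * 2 ^ L ≤ Real.log (totalSAPaths L) ∧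
      Real.log (totalSAPaths L) ≤ 2 * 2 ^ L * Real.log L :=
    (eventually_ge_atTop 2).mono fun _ => log_totalSAPaths_bounds
  have hc : 0 < Real.log 2 / 4 := by have := Real.log_pos one_lt_two; positivity
  refine ⟨tendsto_log_div_of_bounds hc two_pos hbounds, _, 2, hc, two_pos, ?_⟩
  filter_upwards [hbounds] with L ⟨hlow, hup⟩
  constructor
  · rwa [le_div_iff₀ (by positivity)]
  · rw [div_le_iff₀ (by positivity)]
    linarith
end
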